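/- arXiv:1707.07871 — 8 statements merged into one kernel-verified Lean document; each statement's English description precedes it below -/
import Mathlib

section
/- For all distinct x, t ∈ [-1,1] one has (1/4)·W_g'((t+x)/2) ≤ (W_g(t) - W_g(x))/(t - x) ≤ π√2·W_g'((t+x)/2), where W_g'(s) = k·g(s)/(π√(1-s²)). -/
/-!
Write `m = (t + x) / 2`, so that `W t - W x = (k / π) ∫_x^t g(s) / √(1 - s²) ds`.

Lower bound: on the half of `[x, t]` that has `m` as an endpoint and lies on the far side of `m`
from `0`, the weight `1 / √(1 - s²)` is at least its value at `m`, and concavity (the trapezoid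
rule underestimates) together with `g ≥ 0` gives `∫ g ≥ (t - x) g(m) / 4` over that half.

Upper bound: `g ≤ g(t) ≤ 2 g(m)` on `[x, t]` by monotonicity and midpoint concavity, while
`∫_x^t 1 / √(1 - s²) = arcsin t - arcsin x ≤ 2 (t - x) / √(1 - m²)`; the constant `4` so obtained
is at most `π √2`.
-/

open Real MeasureTheory Set intervalIntegral

theorem intervalIntegrable_one_div_sqrt_one_sub_sq {a b : ℝ} (ha : -1 ≤ a) (hab : a ≤ b)
    (hb : b ≤ 1) : IntervalIntegrable (fun s => 1 / √(1 - s ^ 2)) volume a b := by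
  rw [intervalIntegrable_iff_integrableOn_Ioc_of_le hab]
  refine integrableOn_deriv_of_nonneg continuous_arcsin.continuousOn (fun s hs => ?_)
    (fun s _ => by positivity)
  exact hasDerivAt_arcsin (by linarith [hs.1]) (by linarith [hs.2])

theorem integral_one_div_sqrt_one_sub_sq {a b : ℝ} (ha : -1 ≤ a) (hab : a ≤ b) (hb : b ≤ 1) :
    ∫ s in a..b, 1 / √(1 - s ^ 2) = arcsin b - arcsin a :=
  integral_eq_sub_of_hasDerivAt_of_le hab continuous_arcsin.continuousOn
    (fun s hs => hasDerivAt_arcsin (by linarith [hs.1]) (by linarith [hs.2]))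
    (intervalIntegrable_one_div_sqrt_one_sub_sq ha hab hb)

theorem sqrt_sub_sqrt_le_div_sqrt {u v : ℝ} (hv : 0 ≤ v) (hvu : v ≤ u) :
    √u - √v ≤ (u - v) / √u := by
  rcases hvu.eq_or_lt with rfl | hvu
  · simp
  have hu : 0 < √u := sqrt_pos.2 (hv.trans_lt hvu)
  rw [le_div_iff₀ hu, sub_mul, mul_self_sqrt (hv.trans hvu.le)]
  nlinarith [sq_sqrt hv, sqrt_le_sqrt hvu.le, sqrt_nonneg v]

-- `arcsin s + 2 √(1 - s) / √(1 + m)` is antitone on `[m, 1]`, as `√(1 - s²) ≥ √(1 - s) √(1 + m)`.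
theorem arcsin_sub_arcsin_le {m t : ℝ} (hm : -1 < m) (hmt : m ≤ t) (ht : t ≤ 1) :
    arcsin t - arcsin m ≤ 2 * (t - m) / √(1 - m ^ 2) := by
  have hc : 0 < √(1 + m) := sqrt_pos.2 (by linarith)
  set φ : ℝ → ℝ := fun s => arcsin s + 2 * √(1 - s) / √(1 + m)
  have hφ : AntitoneOn φ (Icc m t) := by
    refine antitoneOn_of_hasDerivWithinAt_nonpos (convex_Icc m t) (by fun_prop)
      (f' := fun s => 1 / √(1 - s ^ 2) - 1 / (√(1 - s) * √(1 + m)))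
      (fun s hs => ?_) (fun s hs => ?_)
    all_goals rw [interior_Icc] at hs
    · have h1s : 1 - s ≠ 0 := by linarith [hs.2]
      have hd : HasDerivAt φ (1 / √(1 - s ^ 2) + 2 * (-1 / (2 * √(1 - s))) / √(1 + m)) s :=
        (hasDerivAt_arcsin (by linarith [hs.1]) (by linarith [hs.2])).add
          ((((hasDerivAt_id' s).const_sub 1).sqrt h1s).const_mul 2 |>.div_const _)
      refine (hd.congr_deriv ?_).hasDerivWithinAt
      field_simp
      ring
    · have h1s : 0 < √(1 - s) := sqrt_pos.2 (by linarith [hs.2])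
      rw [sub_nonpos, show 1 - s ^ 2 = (1 - s) * (1 + s) by ring, sqrt_mul (by linarith [hs.2])]
      gcongr
      linarith [hs.1]
  have hφtm := hφ ⟨le_rfl, hmt⟩ ⟨hmt, le_rfl⟩ hmt
  have hsq : √(1 - m ^ 2) = √(1 - m) * √(1 + m) := by
    rw [show 1 - m ^ 2 = (1 - m) * (1 + m) by ring, sqrt_mul (by linarith)]
  calc arcsin t - arcsin m ≤ 2 * (√(1 - m) - √(1 - t)) / √(1 + m) := by
        simp only [φ] at hφtm
        rw [mul_sub, sub_div]
        linarith
    _ ≤ 2 * ((t - m) / √(1 - m)) / √(1 + m) := by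
        gcongr
        have h := sqrt_sub_sqrt_le_div_sqrt (u := 1 - m) (v := 1 - t) (by linarith) (by linarith)
        rwa [sub_sub_sub_cancel_left] at h
    _ = 2 * (t - m) / √(1 - m ^ 2) := by rw [hsq]; ring

theorem ConcaveOn.chord_le_of_mem_Icc {f : ℝ → ℝ} {a b s : ℝ} (hf : ConcaveOn ℝ (Icc a b) f)
    (hab : a < b) (hs : s ∈ Icc a b) :
    f a + (s - a) * ((f b - f a) / (b - a)) ≤ f s := by
  have hba : 0 < b - a := sub_pos.2 hab
  have h := hf.2 (left_mem_Icc.2 hab.le) (right_mem_Icc.2 hab.le)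
    (div_nonneg (sub_nonneg.2 hs.2) hba.le) (div_nonneg (sub_nonneg.2 hs.1) hba.le)
    (by field_simp; ring)
  simp only [smul_eq_mul] at h
  rwa [show (b - s) / (b - a) * a + (s - a) / (b - a) * b = s by field_simp; ring,
    show (b - s) / (b - a) * f a + (s - a) / (b - a) * f b =
      f a + (s - a) * ((f b - f a) / (b - a)) by field_simp; ring] at h

theorem ConcaveOn.trapezoid_le_integral {f : ℝ → ℝ} {a b : ℝ} (hf : ConcaveOn ℝ (Icc a b) f)
    (hab : a ≤ b) (hfi : IntervalIntegrable f volume a b) :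
    (b - a) * ((f a + f b) / 2) ≤ ∫ s in a..b, f s := by
  rcases hab.eq_or_lt with rfl | hab
  · simp
  have hchord : ∫ s in a..b, (f a + (s - a) * ((f b - f a) / (b - a))) =
      (b - a) * ((f a + f b) / 2) := by
    rw [integral_add intervalIntegrable_const
      ((continuous_sub_right a).intervalIntegrable a b |>.mul_const _),
      intervalIntegral.integral_mul_const, integral_comp_sub_right fun s => s]
    simp only [intervalIntegral.integral_const, integral_id, smul_eq_mul, sub_self]
    field_simp
    ring
  rw [← hchord]
  exact integral_mono_on hab.le (Continuous.intervalIntegrable (by fun_prop) a b) hfi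
    fun s hs => hf.chord_le_of_mem_Icc hab hs

theorem MonotoneOn.intervalIntegrable_div_sqrt_one_sub_sq {g : ℝ → ℝ}
    (hg : MonotoneOn g (Icc (-1) 1)) {a b : ℝ} (ha : -1 ≤ a) (hab : a ≤ b) (hb : b ≤ 1) :
    IntervalIntegrable (fun s => g s / √(1 - s ^ 2)) volume a b := by
  have hsub : uIcc a b ⊆ Icc (-1) 1 := by rw [uIcc_of_le hab]; exact Icc_subset_Icc ha hb
  have hw := intervalIntegrable_one_div_sqrt_one_sub_sq ha hab hb
  have hgi := (hg.mono hsub).intervalIntegrable (μ := volume)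
  simp_rw [div_eq_mul_one_div (g _)]
  rw [intervalIntegrable_iff_integrableOn_Ioc_of_le hab] at hw hgi ⊢
  refine hw.bdd_mul hgi.aestronglyMeasurable (c := max |g (-1)| |g 1|)
    (ae_restrict_of_forall_mem measurableSet_Ioc fun s hs => ?_)
  have hs' : s ∈ Icc (-1 : ℝ) 1 := hsub (by rw [uIcc_of_le hab]; exact Ioc_subset_Icc_self hs)
  exact abs_le_max_abs_abs (hg ⟨le_rfl, by norm_num⟩ hs' hs'.1) (hg hs' ⟨by norm_num, le_rfl⟩ hs'.2)

section Weighted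

variable {g : ℝ → ℝ} (hg0 : ∀ s ∈ Icc (-1 : ℝ) 1, 0 ≤ g s) (hgmono : MonotoneOn g (Icc (-1) 1))
  (hgconc : ConcaveOn ℝ (Icc (-1) 1) g) {x t : ℝ}
include hg0 hgmono hgconc

theorem mul_div_sqrt_le_integral_div_sqrt_one_sub_sq (hx : -1 ≤ x) (hxt : x < t) (ht : t ≤ 1) :
    (t - x) / 4 * (g ((t + x) / 2) / √(1 - ((t + x) / 2) ^ 2)) ≤
      ∫ s in x..t, g s / √(1 - s ^ 2) := by
  set m := (t + x) / 2 with hm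
  have hxm : x < m := by rw [hm]; linarith
  have hmt : m < t := by rw [hm]; linarith
  obtain ⟨a, b, hxa, hab, hbt, hlen, hgm, hsq⟩ : ∃ a b, x ≤ a ∧ a ≤ b ∧ b ≤ t ∧
      b - a = (t - x) / 2 ∧ g m ≤ g a + g b ∧ ∀ s ∈ Ioo a b, m ^ 2 ≤ s ^ 2 := by
    rcases le_total 0 m with h0 | h0
    · exact ⟨m, t, by linarith, by linarith, le_rfl, by ring,
        by linarith [hg0 t ⟨by linarith, ht⟩], fun s hs => by nlinarith [hs.1]⟩
    · exact ⟨x, m, le_rfl, by linarith, by linarith, by ring,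
        by linarith [hg0 x ⟨hx, by linarith⟩], fun s hs => by nlinarith [hs.2]⟩
  have hsub : Icc a b ⊆ Icc (-1) 1 := Icc_subset_Icc (by linarith) (by linarith)
  have hgi : IntervalIntegrable g volume a b :=
    (hgmono.mono (by rwa [uIcc_of_le hab])).intervalIntegrable
  calc (t - x) / 4 * (g m / √(1 - m ^ 2)) = (t - x) / 4 * g m / √(1 - m ^ 2) := by ring
    _ ≤ (b - a) * ((g a + g b) / 2) / √(1 - m ^ 2) := by
        gcongr ?_ / _
        rw [hlen]
        nlinarith
    _ ≤ (∫ s in a..b, g s) / √(1 - m ^ 2) := by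
        gcongr
        exact (hgconc.subset hsub (convex_Icc a b)).trapezoid_le_integral hab hgi
    _ = ∫ s in a..b, g s / √(1 - m ^ 2) := (intervalIntegral.integral_div _ _).symm
    _ ≤ ∫ s in a..b, g s / √(1 - s ^ 2) := by
        refine integral_mono_on_of_le_Ioo hab (hgi.div_const _)
          (hgmono.intervalIntegrable_div_sqrt_one_sub_sq (by linarith) hab (by linarith))
          fun s hs => ?_
        have hs' : s ∈ Ioo (-1 : ℝ) 1 := ⟨by linarith [hs.1], by linarith [hs.2]⟩
        exact div_le_div_of_nonneg_left (hg0 s (Ioo_subset_Icc_self hs'))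
          (sqrt_pos.2 (by nlinarith [hs'.1, hs'.2])) (sqrt_le_sqrt (by linarith [hsq s hs]))
    _ ≤ ∫ s in x..t, g s / √(1 - s ^ 2) := by
        refine integral_mono_interval hxa hab hbt
          (ae_restrict_of_forall_mem measurableSet_Ioc fun s hs => ?_)
          (hgmono.intervalIntegrable_div_sqrt_one_sub_sq hx hxt.le ht)
        exact div_nonneg (hg0 s ⟨by linarith [hs.1], by linarith [hs.2]⟩) (sqrt_nonneg _)

theorem integral_div_sqrt_one_sub_sq_le_mul_div_sqrt (hx : -1 ≤ x) (hxt : x < t) (ht : t ≤ 1) :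
    ∫ s in x..t, g s / √(1 - s ^ 2) ≤
      4 * (t - x) * (g ((t + x) / 2) / √(1 - ((t + x) / 2) ^ 2)) := by
  set m := (t + x) / 2 with hm
  have hxm : x < m := by rw [hm]; linarith
  have hmt : m < t := by rw [hm]; linarith
  have hxI : x ∈ Icc (-1 : ℝ) 1 := ⟨hx, by linarith⟩
  have htI : t ∈ Icc (-1 : ℝ) 1 := ⟨by linarith, ht⟩
  have hgt : g t ≤ 2 * g m := by
    have h := hgconc.2 hxI htI (by norm_num : (0 : ℝ) ≤ 1 / 2) (by norm_num : (0 : ℝ) ≤ 1 / 2)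
      (by norm_num)
    simp only [smul_eq_mul] at h
    rw [show 1 / 2 * x + 1 / 2 * t = m by ring] at h
    linarith [hg0 x hxI]
  calc ∫ s in x..t, g s / √(1 - s ^ 2) ≤ ∫ s in x..t, 2 * g m * (1 / √(1 - s ^ 2)) := by
        refine integral_mono_on hxt.le (hgmono.intervalIntegrable_div_sqrt_one_sub_sq hx hxt.le ht)
          ((intervalIntegrable_one_div_sqrt_one_sub_sq hx hxt.le ht).const_mul _) fun s hs => ?_
        rw [mul_one_div]
        exact div_le_div_of_nonneg_right
          ((hgmono ⟨by linarith [hs.1], by linarith [hs.2]⟩ htI hs.2).trans hgt) (sqrt_nonneg _)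
    _ = 2 * g m * ((arcsin t - arcsin m) + (arcsin (-x) - arcsin (-m))) := by
        rw [intervalIntegral.integral_const_mul, integral_one_div_sqrt_one_sub_sq hx hxt.le ht,
          arcsin_neg, arcsin_neg]
        ring
    _ ≤ 2 * g m * (2 * (t - m) / √(1 - m ^ 2) + 2 * (-x - -m) / √(1 - (-m) ^ 2)) := by
        have hgm := hg0 m ⟨by linarith, by linarith⟩
        gcongr
        · exact arcsin_sub_arcsin_le (by linarith) (by linarith) ht
        · exact arcsin_sub_arcsin_le (by linarith) (by linarith) (by linarith)
    _ = 4 * (t - x) * (g m / √(1 - m ^ 2)) := by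
        rw [neg_sq]
        ring

end Weighted

theorem four_le_pi_mul_sqrt_two : 4 ≤ π * √2 := by
  have h : (1.4 : ℝ) ≤ √2 := le_sqrt_of_sq_le (by norm_num)
  nlinarith [pi_gt_three]

theorem stmt_1_general (k : ℕ) (g : ℝ → ℝ)
    (hg0 : ∀ x ∈ Set.Icc (-1:ℝ) 1, 0 ≤ g x)
    (hgmono : MonotoneOn g (Set.Icc (-1:ℝ) 1))
    (hgconc : ConcaveOn ℝ (Set.Icc (-1:ℝ) 1) g)
    (W W' : ℝ → ℝ)
    (hW : ∀ x ∈ Set.Icc (-1:ℝ) 1,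
      W x = ((k : ℝ) / π) * ∫ s in (-1:ℝ)..x, g s / Real.sqrt (1 - s ^ 2))
    (hW' : ∀ s : ℝ, W' s = (k : ℝ) * g s / (π * Real.sqrt (1 - s ^ 2)))
    (x t : ℝ) (hx : x ∈ Set.Icc (-1:ℝ) 1) (ht : t ∈ Set.Icc (-1:ℝ) 1) (hxt : x ≠ t) :
    (1 / 4) * W' ((t + x) / 2) ≤ (W t - W x) / (t - x) ∧
    (W t - W x) / (t - x) ≤ π * Real.sqrt 2 * W' ((t + x) / 2) := by
  wlog hlt : x < t generalizing x t
  · have h := this t x ht hx hxt.symm (hxt.lt_or_gt.resolve_left hlt)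
    rwa [add_comm x t, ← neg_sub (W t) (W x), ← neg_sub t x, neg_div_neg_eq] at h
  have hWsub : W t - W x = k / π * ∫ s in x..t, g s / √(1 - s ^ 2) := by
    rw [hW t ht, hW x hx, ← mul_sub, integral_interval_sub_left
      (hgmono.intervalIntegrable_div_sqrt_one_sub_sq le_rfl ht.1 ht.2)
      (hgmono.intervalIntegrable_div_sqrt_one_sub_sq le_rfl hx.1 hx.2)]
  have hlow := mul_div_sqrt_le_integral_div_sqrt_one_sub_sq hg0 hgmono hgconc hx.1 hlt ht.2
  have hup := integral_div_sqrt_one_sub_sq_le_mul_div_sqrt hg0 hgmono hgconc hx.1 hlt ht.2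
  have hgm : 0 ≤ g ((t + x) / 2) := hg0 _ ⟨by linarith [hx.1], by linarith [ht.2]⟩
  set m := (t + x) / 2
  have htx : 0 < t - x := sub_pos.2 hlt
  rw [hW', hWsub]
  constructor
  · rw [le_div_iff₀ htx]
    calc 1 / 4 * (k * g m / (π * √(1 - m ^ 2))) * (t - x)
        = k / π * ((t - x) / 4 * (g m / √(1 - m ^ 2))) := by ring
      _ ≤ k / π * ∫ s in x..t, g s / √(1 - s ^ 2) := by gcongr
  · rw [div_le_iff₀ htx]
    calc k / π * ∫ s in x..t, g s / √(1 - s ^ 2)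
        ≤ k / π * (4 * (t - x) * (g m / √(1 - m ^ 2))) := by gcongr
      _ = 4 * (k * g m / (π * √(1 - m ^ 2))) * (t - x) := by ring
      _ ≤ π * √2 * (k * g m / (π * √(1 - m ^ 2))) * (t - x) := by
          gcongr
          exact four_le_pi_mul_sqrt_two

theorem stmt_1 (k : ℕ) (hk : 2 ≤ k) (g : ℝ → ℝ)
    (hg0 : ∀ x ∈ Set.Icc (-1:ℝ) 1, 0 ≤ g x)
    (hgmono : MonotoneOn g (Set.Icc (-1:ℝ) 1))
    (hgconc : ConcaveOn ℝ (Set.Icc (-1:ℝ) 1) g)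
    (hgconv : ConvexOn ℝ (Set.Ioo (-1:ℝ) 1) (fun s => g s / (1 + s)))
    (hnorm : (1 / π) * ∫ s in (-1:ℝ)..1, g s / Real.sqrt (1 - s ^ 2) = 1)
    (W W' : ℝ → ℝ)
    (hW : ∀ x ∈ Set.Icc (-1:ℝ) 1,
      W x = ((k : ℝ) / π) * ∫ s in (-1:ℝ)..x, g s / Real.sqrt (1 - s ^ 2))
    (hW' : ∀ s : ℝ, W' s = (k : ℝ) * g s / (π * Real.sqrt (1 - s ^ 2)))
    (x t : ℝ) (hx : x ∈ Set.Icc (-1:ℝ) 1) (ht : t ∈ Set.Icc (-1:ℝ) 1) (hxt : x ≠ t) :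
    (1 / 4) * W' ((t + x) / 2) ≤ (W t - W x) / (t - x) ∧
    (W t - W x) / (t - x) ≤ π * Real.sqrt 2 * W' ((t + x) / 2) :=
  stmt_1_general k g hg0 hgmono hgconc W W' hW hW' x t hx ht hxt
end

section
/- For every positive integer k and all distinct x, t ∈ [-1,1] one has W_1'((t+x)/2) ≤ (W_1(t) - W_1(x))/(t - x) ≤ (π/√2)·W_1'((t+x)/2), where W_1'(s) = k/(π√(1-s²)). -/
/-!
Write `arcsin t = u + v` and `arcsin x = u - v`. Then `t - x = 2 sin v cos u`,
`(t + x) / 2 = sin u cos v` and `1 - ((t + x) / 2) ^ 2 = sin v ^ 2 + cos u ^ 2 * cos v ^ 2`.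
Since `|u| + v ≤ π / 2` we have `sin v ≤ cos u`, so this square root lies between `cos u` and
`√2 cos u`. Together with Jordan's inequality `2 v / π ≤ sin v ≤ v` this squeezes the slope
`2 v / (2 sin v cos u)` of `arcsin`, and `W_1 = (k / π) (π / 2 + arcsin)`.
-/

open Real

lemma sin_le_cos_of_abs_le {u v : ℝ} (hv : -(π / 2) ≤ v) (hu : |u| ≤ π / 2 - v) :
    sin v ≤ cos u := by
  rw [← cos_pi_div_two_sub, ← cos_abs u]
  exact cos_le_cos_of_nonneg_of_le_pi (abs_nonneg u) (by linarith) hu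

lemma one_sub_sq_sin_mul_cos (u v : ℝ) :
    1 - (sin u * cos v) ^ 2 = sin v ^ 2 + cos u ^ 2 * cos v ^ 2 := by
  linear_combination -(cos v ^ 2) * sin_sq_add_cos_sq u - sin_sq_add_cos_sq v

lemma cos_le_sqrt_one_sub_sq_sin_mul_cos (u v : ℝ) :
    cos u ≤ √(1 - (sin u * cos v) ^ 2) :=
  (le_abs_self _).trans <| abs_le_sqrt <| by
    rw [one_sub_sq_sin_mul_cos]
    nlinarith [sin_sq_add_cos_sq u, sin_sq_add_cos_sq v, sq_nonneg (sin u * sin v)]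

lemma sqrt_one_sub_sq_sin_mul_cos_le {u v : ℝ} (h : |sin v| ≤ cos u) :
    √(1 - (sin u * cos v) ^ 2) ≤ √2 * cos u := by
  have hcos : 0 ≤ cos u := (abs_nonneg _).trans h
  rw [← sqrt_sq hcos, ← sqrt_mul zero_le_two]
  refine sqrt_le_sqrt ?_
  rw [one_sub_sq_sin_mul_cos]
  nlinarith [sq_le_sq.mpr (h.trans (le_abs_self _)), cos_sq_le_one v, sq_nonneg (cos u)]

lemma sin_mul_cos_le_sqrt_mul {u v : ℝ} (hv : 0 ≤ v) (hu : 0 ≤ cos u) :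
    sin v * cos u ≤ √(1 - (sin u * cos v) ^ 2) * v :=
  calc sin v * cos u ≤ v * cos u := mul_le_mul_of_nonneg_right (sin_le hv) hu
    _ ≤ √(1 - (sin u * cos v) ^ 2) * v := by
      rw [mul_comm]
      exact mul_le_mul_of_nonneg_right (cos_le_sqrt_one_sub_sq_sin_mul_cos u v) hv

lemma sqrt_mul_le_sin_mul_cos {u v : ℝ} (hv : 0 ≤ v) (hu : |u| ≤ π / 2 - v) :
    √(1 - (sin u * cos v) ^ 2) * v ≤ π / √2 * (sin v * cos u) := by
  have hvπ : v ≤ π / 2 := by linarith [abs_nonneg u]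
  have hsin : 0 ≤ sin v := sin_nonneg_of_nonneg_of_le_pi hv (by linarith [pi_pos])
  have hsc : sin v ≤ cos u := sin_le_cos_of_abs_le (by linarith) hu
  have jordan : v ≤ π / 2 * sin v := by
    have := mul_le_sin hv hvπ
    rw [div_mul_eq_mul_div, div_le_iff₀ pi_pos] at this
    linarith
  calc √(1 - (sin u * cos v) ^ 2) * v ≤ √2 * cos u * (π / 2 * sin v) :=
        mul_le_mul (sqrt_one_sub_sq_sin_mul_cos_le (by rwa [abs_of_nonneg hsin])) jordan hv
          (by positivity [hsin.trans hsc])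
    _ = π / √2 * (sin v * cos u) := by
      field_simp
      rw [sq_sqrt zero_le_two]
      ring

lemma arcsin_sub_arcsin_bounds {x t : ℝ} (hx : x ∈ Set.Icc (-1 : ℝ) 1)
    (ht : t ∈ Set.Icc (-1 : ℝ) 1) (hxt : x ≤ t) :
    t - x ≤ √(1 - ((t + x) / 2) ^ 2) * (arcsin t - arcsin x) ∧
      √(1 - ((t + x) / 2) ^ 2) * (arcsin t - arcsin x) ≤ π / √2 * (t - x) := by
  set u := (arcsin t + arcsin x) / 2
  set v := (arcsin t - arcsin x) / 2
  have hu_add_v : u + v = arcsin t := by ring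
  have hu_sub_v : u - v = arcsin x := by ring
  have hsin_t : sin (u + v) = t := by rw [hu_add_v, sin_arcsin ht.1 ht.2]
  have hsin_x : sin (u - v) = x := by rw [hu_sub_v, sin_arcsin hx.1 hx.2]
  have hdiff : t - x = 2 * (sin v * cos u) := by
    rw [← hsin_t, ← hsin_x, sin_add, sin_sub]; ring
  have hmid : (t + x) / 2 = sin u * cos v := by
    rw [← hsin_t, ← hsin_x, sin_add, sin_sub]; ring
  have harcsin : arcsin t - arcsin x = 2 * v := by ring
  have hv : 0 ≤ v := by have := arcsin_le_arcsin hxt; linarith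
  have hu : |u| ≤ π / 2 - v := by
    rw [abs_le]
    constructor <;> linarith [neg_pi_div_two_le_arcsin x, arcsin_le_pi_div_two t]
  have hcos : 0 ≤ cos u :=
    cos_nonneg_of_neg_pi_div_two_le_of_le (by linarith [neg_abs_le u]) (by linarith [le_abs_self u])
  rw [hdiff, hmid, harcsin, mul_left_comm, mul_left_comm _ 2]
  exact ⟨by linarith [sin_mul_cos_le_sqrt_mul hv hcos],
    by linarith [sqrt_mul_le_sin_mul_cos hv hu]⟩

lemma arcsin_slope_bounds {x t : ℝ} (hx : x ∈ Set.Icc (-1 : ℝ) 1)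
    (ht : t ∈ Set.Icc (-1 : ℝ) 1) (hxt : x ≠ t) :
    (√(1 - ((t + x) / 2) ^ 2))⁻¹ ≤ (arcsin t - arcsin x) / (t - x) ∧
      (arcsin t - arcsin x) / (t - x) ≤ π / √2 * (√(1 - ((t + x) / 2) ^ 2))⁻¹ := by
  wlog hlt : x < t generalizing x t
  · have hswap : (arcsin x - arcsin t) / (x - t) = (arcsin t - arcsin x) / (t - x) := by
      rw [← neg_sub (arcsin t), ← neg_sub t, neg_div_neg_eq]
    simpa only [add_comm x t, hswap] using
      this ht hx hxt.symm ((not_lt.mp hlt).lt_of_ne hxt.symm)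
  have hmid : ((t + x) / 2) ^ 2 < 1 := by
    rw [sq_lt_one_iff_abs_lt_one, abs_lt]
    constructor <;> linarith [hx.1, ht.2]
  have hs : 0 < √(1 - ((t + x) / 2) ^ 2) := sqrt_pos.mpr (by linarith)
  have hd : 0 < t - x := by linarith
  obtain ⟨hlo, hhi⟩ := arcsin_sub_arcsin_bounds hx ht hlt.le
  constructor
  · rw [inv_le_iff_one_le_mul₀' hs, mul_div_assoc', le_div_iff₀ hd, one_mul]
    exact hlo
  · rw [div_le_iff₀ hd, ← div_eq_mul_inv, div_mul_eq_mul_div, le_div_iff₀ hs, mul_comm]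
    exact hhi

theorem stmt_2_general (k : ℕ) (x t : ℝ)
    (hx : x ∈ Set.Icc (-1:ℝ) 1) (ht : t ∈ Set.Icc (-1:ℝ) 1) (hxt : x ≠ t) :
    (k : ℝ) / (π * Real.sqrt (1 - ((t + x) / 2) ^ 2)) ≤
      ((k : ℝ) / π * Real.arccos (-t) - (k : ℝ) / π * Real.arccos (-x)) / (t - x) ∧
    ((k : ℝ) / π * Real.arccos (-t) - (k : ℝ) / π * Real.arccos (-x)) / (t - x) ≤
      (π / Real.sqrt 2) * ((k : ℝ) / (π * Real.sqrt (1 - ((t + x) / 2) ^ 2))) := by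
  have hslope : ((k : ℝ) / π * arccos (-t) - (k : ℝ) / π * arccos (-x)) / (t - x) =
      (k : ℝ) / π * ((arcsin t - arcsin x) / (t - x)) := by
    rw [arccos_neg, arccos_neg, arccos_eq_pi_div_two_sub_arcsin,
      arccos_eq_pi_div_two_sub_arcsin]
    ring
  have hk : (0 : ℝ) ≤ k / π := by positivity
  obtain ⟨hlo, hhi⟩ := arcsin_slope_bounds hx ht hxt
  rw [hslope, div_mul_eq_div_div, div_eq_mul_inv _ (√_), mul_left_comm (π / √2)]
  exact ⟨mul_le_mul_of_nonneg_left hlo hk, mul_le_mul_of_nonneg_left hhi hk⟩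

theorem stmt_2 (k : ℕ) (hk : 0 < k) (x t : ℝ)
    (hx : x ∈ Set.Icc (-1:ℝ) 1) (ht : t ∈ Set.Icc (-1:ℝ) 1) (hxt : x ≠ t) :
    (k : ℝ) / (π * Real.sqrt (1 - ((t + x) / 2) ^ 2)) ≤
      ((k : ℝ) / π * Real.arccos (-t) - (k : ℝ) / π * Real.arccos (-x)) / (t - x) ∧
    ((k : ℝ) / π * Real.arccos (-t) - (k : ℝ) / π * Real.arccos (-x)) / (t - x) ≤
      (π / Real.sqrt 2) * ((k : ℝ) / (π * Real.sqrt (1 - ((t + x) / 2) ^ 2))) :=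
  stmt_2_general k x t hx ht hxt
end

section
/- Let g : [-1,1] → ℝ be nonnegative, increasing and concave on [-1,1]. Then for all -1 ≤ x < t ≤ 1, writing x̄ = (∫_x^t s/√(1-s²) ds)/(∫_x^t ds/√(1-s²)) for the mean of s with respect to the weight 1/√(1-s²) on [x,t], one has g(x̄) ≤ 2·g((x+t)/2). -/
open Real MeasureTheory

lemma w_integrable_right :
    IntervalIntegrable (fun s : ℝ => 1 / Real.sqrt (1 - s ^ 2)) volume 0 1 := by
  have hr : (-1 : ℝ) < -(1/2) := by norm_num
  have hbig : IntervalIntegrable (fun s : ℝ => (1 - s) ^ (-(1/2) : ℝ)) volume 0 1 := by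
    simpa using (intervalIntegral.intervalIntegrable_rpow' hr (a := 1) (b := 0)).comp_sub_left 1
  refine hbig.mono_fun' ?_ ?_
  · exact (measurable_const.div ((Real.continuous_sqrt.measurable).comp
      (measurable_const.sub (measurable_id'.pow_const 2)))).aestronglyMeasurable
  · refine (MeasureTheory.ae_restrict_iff' measurableSet_uIoc).mpr (Filter.Eventually.of_forall ?_)
    intro s hs
    rw [Set.uIoc_of_le (by norm_num : (0:ℝ) ≤ 1)] at hs
    obtain ⟨h0, h1⟩ := hs
    have hnn : (0:ℝ) ≤ 1 - s := by linarith
    have hle : 1 - s ≤ 1 - s ^ 2 := by nlinarith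
    have hrw : (1 - s) ^ (-(1/2) : ℝ) = 1 / Real.sqrt (1 - s) := by
      rw [Real.rpow_neg hnn, Real.sqrt_eq_rpow]; exact (one_div _).symm
    show ‖(1:ℝ) / Real.sqrt (1 - s ^ 2)‖ ≤ (1 - s) ^ (-(1/2) : ℝ)
    rw [hrw, Real.norm_eq_abs, abs_of_nonneg (by positivity)]
    rcases eq_or_lt_of_le hnn with h | h
    · rw [← h] at hle ⊢
      have h2 : Real.sqrt (1 - s ^ 2) = 0 := by
        have : 1 - s ^ 2 = 0 := le_antisymm (by nlinarith) (by linarith)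
        simp [this]
      simp [h2]
    · have hs1 : (0:ℝ) < Real.sqrt (1 - s) := Real.sqrt_pos.mpr h
      have hs2 : Real.sqrt (1 - s) ≤ Real.sqrt (1 - s ^ 2) := Real.sqrt_le_sqrt hle
      exact one_div_le_one_div_of_le hs1 hs2

lemma w_integrable_left :
    IntervalIntegrable (fun s : ℝ => 1 / Real.sqrt (1 - s ^ 2)) volume (-1) 0 := by
  have hr : (-1 : ℝ) < -(1/2) := by norm_num
  have hbig : IntervalIntegrable (fun s : ℝ => (1 + s) ^ (-(1/2) : ℝ)) volume (-1) 0 := by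
    simpa using (intervalIntegral.intervalIntegrable_rpow' hr (a := 0) (b := 1)).comp_add_left 1
  refine hbig.mono_fun' ?_ ?_
  · exact (measurable_const.div ((Real.continuous_sqrt.measurable).comp
      (measurable_const.sub (measurable_id'.pow_const 2)))).aestronglyMeasurable
  · refine (MeasureTheory.ae_restrict_iff' measurableSet_uIoc).mpr (Filter.Eventually.of_forall ?_)
    intro s hs
    rw [Set.uIoc_of_le (by norm_num : (-1:ℝ) ≤ 0)] at hs
    obtain ⟨h0, h1⟩ := hs
    have hpos : (0:ℝ) < 1 + s := by linarith
    have hle : 1 + s ≤ 1 - s ^ 2 := by nlinarith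
    have hrw : (1 + s) ^ (-(1/2) : ℝ) = 1 / Real.sqrt (1 + s) := by
      rw [Real.rpow_neg hpos.le, Real.sqrt_eq_rpow]; exact (one_div _).symm
    show ‖(1:ℝ) / Real.sqrt (1 - s ^ 2)‖ ≤ (1 + s) ^ (-(1/2) : ℝ)
    rw [hrw, Real.norm_eq_abs, abs_of_nonneg (by positivity)]
    have hs1 : (0:ℝ) < Real.sqrt (1 + s) := Real.sqrt_pos.mpr hpos
    have hs2 : Real.sqrt (1 + s) ≤ Real.sqrt (1 - s ^ 2) := Real.sqrt_le_sqrt hle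
    exact one_div_le_one_div_of_le hs1 hs2

lemma w_integrable :
    IntervalIntegrable (fun s : ℝ => 1 / Real.sqrt (1 - s ^ 2)) volume (-1) 1 :=
  w_integrable_left.trans w_integrable_right

theorem stmt_4 (g : ℝ → ℝ)
    (hg0 : ∀ x ∈ Set.Icc (-1:ℝ) 1, 0 ≤ g x)
    (hgmono : MonotoneOn g (Set.Icc (-1:ℝ) 1))
    (hgconc : ConcaveOn ℝ (Set.Icc (-1:ℝ) 1) g)
    (x t : ℝ) (hx : -1 ≤ x) (hxt : x < t) (ht : t ≤ 1) :
    g ((∫ s in x..t, s / Real.sqrt (1 - s ^ 2)) /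
       (∫ s in x..t, 1 / Real.sqrt (1 - s ^ 2))) ≤ 2 * g ((x + t) / 2) := by
  set w : ℝ → ℝ := fun s => 1 / Real.sqrt (1 - s ^ 2) with hw
  have hwnn : ∀ s, 0 ≤ w s := fun s => by positivity
  have hsub : Set.uIcc x t ⊆ Set.uIcc (-1:ℝ) 1 := by
    rw [Set.uIcc_of_le hxt.le, Set.uIcc_of_le (by norm_num : (-1:ℝ) ≤ 1)]
    exact Set.Icc_subset_Icc hx ht
  have hID : IntervalIntegrable w volume x t := w_integrable.mono_set hsub
  have hIN : IntervalIntegrable (fun s => s / Real.sqrt (1 - s ^ 2)) volume x t := by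
    refine hID.mono_fun ?_ ?_
    · exact (measurable_id'.div ((Real.continuous_sqrt.measurable).comp
        (measurable_const.sub (measurable_id'.pow_const 2)))).aestronglyMeasurable
    · refine (MeasureTheory.ae_restrict_iff' measurableSet_uIoc).mpr
        (Filter.Eventually.of_forall ?_)
      intro s hs
      have hs' : s ∈ Set.uIcc (-1:ℝ) 1 := hsub (Set.uIoc_subset_uIcc hs)
      rw [Set.uIcc_of_le (by norm_num : (-1:ℝ) ≤ 1)] at hs'
      have habs : |s| ≤ 1 := abs_le.mpr ⟨hs'.1, hs'.2⟩
      simp only [hw, Real.norm_eq_abs, abs_div]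
      rw [abs_one]
      exact div_le_div_of_nonneg_right habs (abs_nonneg _)
  set N := ∫ s in x..t, s / Real.sqrt (1 - s ^ 2) with hN
  set D := ∫ s in x..t, w s with hD
  have hDpos : 0 < D := by
    refine intervalIntegral.intervalIntegral_pos_of_pos_on hID ?_ hxt
    intro s hs
    have h1 : (0:ℝ) < 1 - s ^ 2 := by nlinarith [hs.1, hs.2]
    positivity
  have hNle : N ≤ t * D := by
    have : N ≤ ∫ s in x..t, t * w s := by
      refine intervalIntegral.integral_mono_on hxt.le hIN (hID.const_mul t) ?_
      intro s hs
      have : s / Real.sqrt (1 - s ^ 2) = s * w s := by rw [hw]; ring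
      rw [this]
      exact mul_le_mul_of_nonneg_right hs.2 (hwnn s)
    simpa [intervalIntegral.integral_const_mul] using this
  have hNge : x * D ≤ N := by
    have : (∫ s in x..t, x * w s) ≤ N := by
      refine intervalIntegral.integral_mono_on hxt.le (hID.const_mul x) hIN ?_
      intro s hs
      have h : s / Real.sqrt (1 - s ^ 2) = s * w s := by rw [hw]; ring
      rw [h]
      exact mul_le_mul_of_nonneg_right hs.1 (hwnn s)
    simpa [intervalIntegral.integral_const_mul] using this
  have hxb_le : N / D ≤ t := (div_le_iff₀ hDpos).mpr hNle
  have hxb_ge : x ≤ N / D := (le_div_iff₀ hDpos).mpr hNge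
  have hmem_xb : N / D ∈ Set.Icc (-1:ℝ) 1 := ⟨hx.trans hxb_ge, hxb_le.trans ht⟩
  have hmem_t : t ∈ Set.Icc (-1:ℝ) 1 := ⟨by linarith, ht⟩
  have hmem_x : x ∈ Set.Icc (-1:ℝ) 1 := ⟨hx, by linarith⟩
  have h1 : g (N / D) ≤ g t := hgmono hmem_xb hmem_t hxb_le
  have h2 : (1/2 : ℝ) • g x + (1/2 : ℝ) • g t ≤ g ((1/2 : ℝ) • x + (1/2 : ℝ) • t) :=
    hgconc.2 hmem_x hmem_t (by norm_num) (by norm_num) (by norm_num)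
  have hmid : (1/2 : ℝ) • x + (1/2 : ℝ) • t = (x + t) / 2 := by
    simp [smul_eq_mul]; ring
  rw [hmid] at h2
  have hgx : 0 ≤ g x := hg0 x hmem_x
  simp only [smul_eq_mul] at h2
  linarith
end

section
/- Let g : [-1,1] → ℝ be nonnegative, increasing and concave on [-1,1], with h(s) = g(s)/(1+s) convex on (-1,1). Then for all -1 ≤ x < t ≤ 1, writing x̄ = (∫_x^t s·(1+s)/√(1-s²) ds)/(∫_x^t (1+s)/√(1-s²) ds) for the mean of s with respect to the weight (1+s)/√(1-s²) on [x,t], one has h(x̄) ≥ (1/2)·h((x+t)/2). -/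
open Real MeasureTheory Set

/-!
The weight `w(s) = (1 + s) / √(1 - s²)` is increasing on `[-1, 1)`, so its barycenter `x̄` on
`[x, t]` lies in `[m, t]` with `m = (x + t) / 2`: since `∫ (s - m) = 0` over `[x, t]`, the
quantity `∫ (s - m) w(s)` equals `∫ (s - m) (w(s) - w(m)) ≥ 0`. As `g` is nonnegative and
increasing, `h(x̄) ≥ g(m) / (1 + t) ≥ g(m) / (2 (1 + m))`, the last step because
`1 + t ≤ 2 (1 + m)`.
-/

section Barycenter

variable {w : ℝ → ℝ} {a b : ℝ}

theorem IntervalIntegrable.id_mul (hwi : IntervalIntegrable w volume a b) :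
    IntervalIntegrable (fun s => s * w s) volume a b :=
  hwi.continuousOn_mul continuousOn_id

theorem midpoint_mul_integral_le_integral_mul (hab : a < b) (hw : MonotoneOn w (Ico a b))
    (hwi : IntervalIntegrable w volume a b) :
    (a + b) / 2 * ∫ s in a..b, w s ≤ ∫ s in a..b, s * w s := by
  set m := (a + b) / 2 with hm_def
  have hm : m ∈ Ico a b := ⟨by linarith, by linarith⟩
  have hcentered : ∫ s in a..b, (s - m) = 0 := by
    rw [intervalIntegral.integral_sub intervalIntegral.intervalIntegrable_id
        intervalIntegrable_const, integral_id,
      intervalIntegral.integral_const, smul_eq_mul, hm_def]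
    ring
  have hshift : ∫ s in a..b, (s - m) * (w s - w m) =
      (∫ s in a..b, s * w s) - m * ∫ s in a..b, w s := by
    have : ∀ s, (s - m) * (w s - w m) = (s * w s - m * w s) - w m * (s - m) := fun s => by ring
    simp only [this]
    rw [intervalIntegral.integral_sub (hwi.id_mul.sub (hwi.const_mul m))
        ((intervalIntegral.intervalIntegrable_id.sub intervalIntegrable_const).const_mul _),
      intervalIntegral.integral_sub hwi.id_mul (hwi.const_mul m),
      intervalIntegral.integral_const_mul, intervalIntegral.integral_const_mul, hcentered, mul_zero,
      sub_zero]
  have hnonneg : 0 ≤ ∫ s in a..b, (s - m) * (w s - w m) := by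
    rw [← intervalIntegral.integral_zero]
    refine intervalIntegral.integral_mono_on_of_le_Ioo hab.le intervalIntegrable_const ?_
      fun s hs => ?_
    · exact (hwi.sub intervalIntegrable_const).continuousOn_mul
        (continuousOn_id.sub continuousOn_const)
    · rcases le_total s m with hsm | hsm
      · exact mul_nonneg_of_nonpos_of_nonpos (by linarith)
          (sub_nonpos.2 (hw ⟨hs.1.le, hs.2⟩ hm hsm))
      · exact mul_nonneg (by linarith) (sub_nonneg.2 (hw hm ⟨hs.1.le, hs.2⟩ hsm))
  linarith

theorem integral_mul_le_mul_integral (hab : a ≤ b) (hw : ∀ s ∈ Ioo a b, 0 ≤ w s)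
    (hwi : IntervalIntegrable w volume a b) :
    ∫ s in a..b, s * w s ≤ b * ∫ s in a..b, w s := by
  rw [← intervalIntegral.integral_const_mul]
  exact intervalIntegral.integral_mono_on_of_le_Ioo hab hwi.id_mul (hwi.const_mul b)
    fun s hs => mul_le_mul_of_nonneg_right hs.2.le (hw s hs)

end Barycenter

noncomputable def weight (s : ℝ) : ℝ := (1 + s) / √(1 - s ^ 2)

theorem weight_pos {s : ℝ} (h1 : -1 < s) (h2 : s < 1) : 0 < weight s :=
  div_pos (by linarith) (sqrt_pos.2 (by nlinarith))

theorem weight_eq_sqrt {s : ℝ} (h1 : -1 ≤ s) (h2 : s < 1) :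
    weight s = √((1 + s) / (1 - s)) := by
  rcases h1.eq_or_lt with rfl | h1
  · norm_num [weight]
  have hp : 0 < 1 + s := by linarith
  have hm : 0 < 1 - s := by linarith
  rw [weight, show 1 - s ^ 2 = (1 - s) * (1 + s) by ring, sqrt_div' _ hm.le, sqrt_mul hm.le,
    div_eq_div_iff (by positivity) (by positivity)]
  nth_rewrite 1 [← sq_sqrt hp.le]
  ring

theorem monotoneOn_weight : MonotoneOn weight (Ico (-1) 1) := by
  intro a ha b hb hab
  rw [weight_eq_sqrt ha.1 ha.2, weight_eq_sqrt hb.1 hb.2]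
  exact sqrt_le_sqrt <|
    div_le_div₀ (by linarith [hb.1]) (by linarith) (by linarith [hb.2]) (by linarith)

theorem hasDerivAt_arcsin_sub_sqrt {s : ℝ} (h1 : -1 < s) (h2 : s < 1) :
    HasDerivAt (fun s => arcsin s - √(1 - s ^ 2)) (weight s) s := by
  have hpos : 0 < 1 - s ^ 2 := by nlinarith
  refine ((hasDerivAt_arcsin h1.ne' h2.ne).sub
    (((hasDerivAt_pow 2 s).const_sub 1).sqrt hpos.ne')).congr_deriv ?_
  unfold weight
  field_simp
  ring

theorem intervalIntegrable_weight {a b : ℝ} (ha : a ∈ Icc (-1) 1) (hb : b ∈ Icc (-1) 1) :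
    IntervalIntegrable weight volume a b := by
  have hIoo : Ioo (min (-1 : ℝ) 1) (max (-1) 1) = Ioo (-1) 1 := by norm_num
  have : IntervalIntegrable weight volume (-1) 1 :=
    intervalIntegral.intervalIntegrable_deriv_of_nonneg
      (g := fun s => arcsin s - √(1 - s ^ 2)) (by fun_prop)
      (fun s hs => by rw [hIoo] at hs; exact hasDerivAt_arcsin_sub_sqrt hs.1 hs.2)
      (fun s hs => by rw [hIoo] at hs; exact (weight_pos hs.1 hs.2).le)
  refine this.mono_set (uIcc_subset_uIcc ?_ ?_) <;> rwa [uIcc_of_le (by norm_num)]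

theorem stmt_5_general (g : ℝ → ℝ)
    (hg0 : ∀ x ∈ Set.Icc (-1:ℝ) 1, 0 ≤ g x)
    (hgmono : MonotoneOn g (Set.Icc (-1:ℝ) 1))
    (x t : ℝ) (hx : -1 ≤ x) (hxt : x < t) (ht : t ≤ 1) :
    (1 / 2) * (g ((x + t) / 2) / (1 + (x + t) / 2)) ≤
      (fun s => g s / (1 + s))
        ((∫ s in x..t, s * (1 + s) / Real.sqrt (1 - s ^ 2)) /
         (∫ s in x..t, (1 + s) / Real.sqrt (1 - s ^ 2))) := by
  have hweight : ∀ s, (1 + s) / √(1 - s ^ 2) = weight s := fun _ => rfl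
  simp only [mul_div_assoc, hweight]
  have hwi : IntervalIntegrable weight volume x t :=
    intervalIntegrable_weight ⟨hx, by linarith⟩ ⟨by linarith, ht⟩
  have hpos : ∀ s ∈ Ioo x t, 0 < weight s := fun s hs =>
    weight_pos (by linarith [hs.1]) (by linarith [hs.2])
  have hI : 0 < ∫ s in x..t, weight s :=
    intervalIntegral.intervalIntegral_pos_of_pos_on hwi hpos hxt
  set m := (x + t) / 2 with hm
  set y := (∫ s in x..t, s * weight s) / ∫ s in x..t, weight s
  have hmy : m ≤ y := (le_div_iff₀ hI).2
    (midpoint_mul_integral_le_integral_mul hxt (monotoneOn_weight.mono (Ico_subset_Ico hx ht)) hwi)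
  have hyt : y ≤ t := (div_le_iff₀ hI).2
    (integral_mul_le_mul_integral hxt.le (fun s hs => (hpos s hs).le) hwi)
  have hgm : 0 ≤ g m := hg0 m ⟨by linarith, by linarith⟩
  have hgy : g m ≤ g y := hgmono ⟨by linarith, by linarith⟩ ⟨by linarith, by linarith⟩ hmy
  calc 1 / 2 * (g m / (1 + m)) = g m / (2 * (1 + m)) := by field_simp
    _ ≤ g m / (1 + y) := div_le_div_of_nonneg_left hgm (by linarith) (by linarith)
    _ ≤ g y / (1 + y) := by gcongr; linarith

theorem stmt_5 (g : ℝ → ℝ)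
    (hg0 : ∀ x ∈ Set.Icc (-1:ℝ) 1, 0 ≤ g x)
    (hgmono : MonotoneOn g (Set.Icc (-1:ℝ) 1))
    (hgconc : ConcaveOn ℝ (Set.Icc (-1:ℝ) 1) g)
    (hgconv : ConvexOn ℝ (Set.Ioo (-1:ℝ) 1) (fun s => g s / (1 + s)))
    (x t : ℝ) (hx : -1 ≤ x) (hxt : x < t) (ht : t ≤ 1) :
    (1 / 2) * (g ((x + t) / 2) / (1 + (x + t) / 2)) ≤
      (fun s => g s / (1 + s))
        ((∫ s in x..t, s * (1 + s) / Real.sqrt (1 - s ^ 2)) /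
         (∫ s in x..t, (1 + s) / Real.sqrt (1 - s ^ 2))) :=
  stmt_5_general g hg0 hgmono x t hx hxt ht
end

section
/- For every j ∈ {0,1,…,k-1} one has g(t_j)·(α_{j+1} - α_j) ≤ π/k ≤ g(t_{j+1})·(α_{j+1} - α_j); consequently the sequence (α_{j+1} - α_j)_{0 ≤ j ≤ k-1} is nonincreasing in j. -/
open Real MeasureTheory

lemma my_sqrt_one_sub_sq_intble :
    IntervalIntegrable (fun x : ℝ => 1 / Real.sqrt (1 - x ^ 2)) volume (-1) 1 := by
  have hmeas : ∀ a b : ℝ, AEStronglyMeasurable (fun x : ℝ => 1 / Real.sqrt (1 - x ^ 2))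
      (volume.restrict (Set.uIoc a b)) :=
    fun a b => (measurable_const.div
      ((continuous_const.sub (continuous_pow 2)).sqrt.measurable)).aestronglyMeasurable
  have key : ∀ x : ℝ, -1 ≤ x → x ≤ 1 → 0 ≤ 1 - x → Real.sqrt (1 - x) ≤ Real.sqrt (1 - x ^ 2) →
      ‖1 / Real.sqrt (1 - x ^ 2)‖ ≤ ‖(1 - x) ^ (-(1/2) : ℝ)‖ := by
    intro x hxm hx1 h1x hle
    have hrpow : (1 - x) ^ (-(1/2) : ℝ) = 1 / Real.sqrt (1 - x) := by
      rw [Real.rpow_neg h1x, Real.sqrt_eq_rpow]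
      exact (one_div _).symm
    simp only [Real.norm_eq_abs]
    rw [abs_of_nonneg (by positivity), abs_of_nonneg (by positivity), hrpow]
    rcases eq_or_lt_of_le (Real.sqrt_nonneg (1 - x)) with h0 | h0
    · rw [← h0, div_zero]
      have hx : x = 1 := by nlinarith [Real.sqrt_eq_zero'.mp h0.symm]
      rw [hx]; norm_num
    · exact div_le_div_of_nonneg_left one_pos.le h0 hle
  have h1 : IntervalIntegrable (fun x : ℝ => 1 / Real.sqrt (1 - x ^ 2)) volume 0 1 := by
    have hb : IntervalIntegrable (fun x : ℝ => (1 - x) ^ (-(1/2) : ℝ)) volume 0 1 := by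
      have h := intervalIntegral.intervalIntegrable_rpow' (a := 1) (b := 0)
        (r := (-(1/2) : ℝ)) (by norm_num)
      simpa using h.comp_sub_left 1
    refine hb.mono_fun (hmeas 0 1) ?_
    filter_upwards [ae_restrict_mem measurableSet_uIoc] with x hx
    rw [Set.uIoc_of_le (by norm_num : (0:ℝ) ≤ 1)] at hx
    refine key x (by linarith [hx.1]) hx.2 (by linarith [hx.2]) ?_
    apply Real.sqrt_le_sqrt; nlinarith [hx.1.le, hx.2]
  have h2 : IntervalIntegrable (fun x : ℝ => 1 / Real.sqrt (1 - x ^ 2)) volume (-1) 0 := by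
    have hb : IntervalIntegrable (fun x : ℝ => (x + 1) ^ (-(1/2) : ℝ)) volume (-1) 0 := by
      have h := intervalIntegral.intervalIntegrable_rpow' (a := 0) (b := 1)
        (r := (-(1/2) : ℝ)) (by norm_num)
      have h2 := h.comp_sub_right (-1)
      norm_num at h2
      exact h2
    refine hb.mono_fun (hmeas (-1) 0) ?_
    filter_upwards [ae_restrict_mem measurableSet_uIoc] with x hx
    rw [Set.uIoc_of_le (by norm_num : (-1:ℝ) ≤ 0)] at hx
    have hkey : ‖1 / Real.sqrt (1 - (-x) ^ 2)‖ ≤ ‖(1 - (-x)) ^ (-(1/2) : ℝ)‖ := by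
      refine key (-x) (by linarith [hx.2]) (by linarith [hx.1]) (by linarith [hx.1]) ?_
      apply Real.sqrt_le_sqrt; nlinarith [hx.1, hx.2]
    simpa [sub_neg_eq_add, add_comm] using hkey
  exact h2.trans h1

lemma my_integral_one_div_sqrt {a b : ℝ} (ha : -1 ≤ a) (hb : b ≤ 1) (hab : a ≤ b) :
    ∫ x in a..b, 1 / Real.sqrt (1 - x ^ 2) = Real.arcsin b - Real.arcsin a := by
  apply intervalIntegral.integral_eq_sub_of_hasDerivAt_of_le hab
    Real.continuous_arcsin.continuousOn
  · intro x hx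
    exact Real.hasDerivAt_arcsin (ne_of_gt (lt_of_le_of_lt ha hx.1))
      (ne_of_lt (lt_of_lt_of_le hx.2 hb))
  · apply my_sqrt_one_sub_sq_intble.mono_set
    rw [Set.uIcc_of_le hab, Set.uIcc_of_le (by norm_num : (-1:ℝ) ≤ 1)]
    exact Set.Icc_subset_Icc ha hb

theorem stmt_9 (k : ℕ) (hk : 2 ≤ k) (g : ℝ → ℝ)
    (hg0 : ∀ x ∈ Set.Icc (-1:ℝ) 1, 0 ≤ g x)
    (hgmono : MonotoneOn g (Set.Icc (-1:ℝ) 1))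
    (hgconc : ConcaveOn ℝ (Set.Icc (-1:ℝ) 1) g)
    (hgconv : ConvexOn ℝ (Set.Ioo (-1:ℝ) 1) (fun s => g s / (1 + s)))
    (hnorm : (1 / π) * ∫ s in (-1:ℝ)..1, g s / Real.sqrt (1 - s ^ 2) = 1)
    (t : ℕ → ℝ)
    (ht0 : t 0 = -1) (htk : t k = 1)
    (htmem : ∀ j ≤ k, t j ∈ Set.Icc (-1:ℝ) 1)
    (htmono : ∀ i j : ℕ, i < j → j ≤ k → t i < t j)
    (htW : ∀ j ≤ k,
      ((k : ℝ) / π) * ∫ s in (-1:ℝ)..(t j), g s / Real.sqrt (1 - s ^ 2) = (j : ℝ))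
    (α : ℕ → ℝ) (hα : ∀ j ≤ k, α j = Real.arccos (-(t j)))
    :
    (∀ j : ℕ, j < k →
      g (t j) * (α (j + 1) - α j) ≤ π / k ∧ π / k ≤ g (t (j + 1)) * (α (j + 1) - α j)) ∧
    (∀ i j : ℕ, i ≤ j → j < k → α (j + 1) - α j ≤ α (i + 1) - α i) := by
  have hπ : (0:ℝ) < π := Real.pi_pos
  have hk0 : (0:ℝ) < (k:ℝ) := by exact_mod_cast Nat.lt_of_lt_of_le Nat.zero_lt_two hk
  set f : ℝ → ℝ := fun s => g s / Real.sqrt (1 - s ^ 2) with hfdef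
  -- integrability of 1/√(1-x²) on subintervals of [-1,1]
  have hII : ∀ a b : ℝ, a ∈ Set.Icc (-1:ℝ) 1 → b ∈ Set.Icc (-1:ℝ) 1 →
      IntervalIntegrable (fun x : ℝ => 1 / Real.sqrt (1 - x ^ 2)) volume a b := by
    intro a b ha hb
    apply my_sqrt_one_sub_sq_intble.mono_set
    rw [Set.uIcc_of_le (by norm_num : (-1:ℝ) ≤ 1)]
    exact Set.uIcc_subset_Icc ha hb
  have huIcc : ∀ a b : ℝ, a ∈ Set.Icc (-1:ℝ) 1 → b ∈ Set.Icc (-1:ℝ) 1 →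
      Set.uIoc a b ⊆ Set.Icc (-1:ℝ) 1 := by
    intro a b ha hb
    refine Set.Subset.trans Set.Ioc_subset_Icc_self ?_
    exact Set.uIcc_subset_Icc ha hb
  -- integrability of f on subintervals of [-1,1]
  have hfint : ∀ a b : ℝ, a ∈ Set.Icc (-1:ℝ) 1 → b ∈ Set.Icc (-1:ℝ) 1 →
      IntervalIntegrable f volume a b := by
    intro a b ha hb
    have hg_ae : AEMeasurable g (volume.restrict (Set.uIoc a b)) :=
      (aemeasurable_restrict_of_monotoneOn measurableSet_Icc hgmono).mono_measure
        (Measure.restrict_mono (huIcc a b ha hb) le_rfl)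
    have hfmeas : AEStronglyMeasurable f (volume.restrict (Set.uIoc a b)) :=
      (hg_ae.div
        ((continuous_const.sub (continuous_pow 2)).sqrt.measurable.aemeasurable)).aestronglyMeasurable
    refine ((hII a b ha hb).const_mul (g 1)).mono_fun hfmeas ?_
    filter_upwards [ae_restrict_mem measurableSet_uIoc] with x hx
    have hxI : x ∈ Set.Icc (-1:ℝ) 1 := huIcc a b ha hb hx
    have h0 : 0 ≤ Real.sqrt (1 - x ^ 2) := Real.sqrt_nonneg _
    have hgx : 0 ≤ g x := hg0 x hxI
    have hg1 : g x ≤ g 1 := hgmono hxI (Set.right_mem_Icc.mpr (by norm_num)) hxI.2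
    simp only [Real.norm_eq_abs, hfdef]
    rw [abs_of_nonneg (div_nonneg hgx h0),
      abs_of_nonneg (mul_nonneg (hgx.trans hg1) (div_nonneg zero_le_one h0)), mul_one_div]
    rcases eq_or_lt_of_le h0 with h0' | h0'
    · rw [← h0', div_zero, div_zero]
    · exact (div_le_div_iff_of_pos_right h0').mpr hg1
  -- the value of each piece
  have key : ∀ j : ℕ, j < k → ∫ s in (t j)..(t (j+1)), f s = π / k := by
    intro j hj
    have hIeq : ∀ m : ℕ, m ≤ k → ∫ s in (-1:ℝ)..(t m), f s = (m : ℝ) * (π / k) := by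
      intro m hm
      have h1 := htW m hm
      have hc : ((k:ℝ)/π) ≠ 0 := ne_of_gt (div_pos hk0 hπ)
      have : (∫ s in (-1:ℝ)..(t m), f s) = (m : ℝ) / ((k:ℝ)/π) :=
        eq_div_of_mul_eq hc (by rw [mul_comm]; exact h1)
      rw [this, div_div_eq_mul_div, mul_div_assoc]
    have hint1 : IntervalIntegrable f volume (-1) (t j) :=
      hfint _ _ (Set.left_mem_Icc.mpr (by norm_num)) (htmem j hj.le)
    have hint2 : IntervalIntegrable f volume (-1) (t (j+1)) :=
      hfint _ _ (Set.left_mem_Icc.mpr (by norm_num)) (htmem (j+1) hj)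
    have hsplit := intervalIntegral.integral_interval_sub_left hint2 hint1
    rw [hIeq (j+1) hj, hIeq j hj.le] at hsplit
    rw [← hsplit]
    push_cast
    ring
  -- arcsin expression of α
  have hα' : ∀ j, j ≤ k → α j = π/2 + Real.arcsin (t j) := by
    intro j hj
    rw [hα j hj, Real.arccos_neg, Real.arccos_eq_pi_div_two_sub_arcsin]
    ring
  have part1 : ∀ j : ℕ, j < k →
      g (t j) * (α (j + 1) - α j) ≤ π / k ∧ π / k ≤ g (t (j + 1)) * (α (j + 1) - α j) := by
    intro j hj
    have hjm := htmem j hj.le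
    have hjm1 := htmem (j+1) hj
    have hlt : t j < t (j+1) := htmono j (j+1) (lt_add_one j) hj
    have hαdiff : α (j+1) - α j = Real.arcsin (t (j+1)) - Real.arcsin (t j) := by
      rw [hα' (j+1) hj, hα' j hj.le]; ring
    have harc : ∫ x in (t j)..(t (j+1)), 1 / Real.sqrt (1 - x ^ 2)
        = Real.arcsin (t (j+1)) - Real.arcsin (t j) :=
      my_integral_one_div_sqrt hjm.1 hjm1.2 hlt.le
    constructor
    · rw [hαdiff, ← harc, ← intervalIntegral.integral_const_mul, ← key j hj]
      apply intervalIntegral.integral_mono_on hlt.le ((hII _ _ hjm hjm1).const_mul _)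
        (hfint _ _ hjm hjm1)
      intro x hx
      have hxI : x ∈ Set.Icc (-1:ℝ) 1 := ⟨hjm.1.trans hx.1, hx.2.trans hjm1.2⟩
      have hgle : g (t j) ≤ g x := hgmono hjm hxI hx.1
      rcases eq_or_lt_of_le (Real.sqrt_nonneg (1 - x ^ 2)) with h0 | h0
      · simp only [hfdef, ← h0, div_zero, mul_zero, le_refl]
      · rw [mul_one_div]
        exact (div_le_div_iff_of_pos_right h0).mpr hgle
    · rw [hαdiff, ← harc, ← intervalIntegral.integral_const_mul, ← key j hj]
      apply intervalIntegral.integral_mono_on hlt.le (hfint _ _ hjm hjm1)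
        ((hII _ _ hjm hjm1).const_mul _)
      intro x hx
      have hxI : x ∈ Set.Icc (-1:ℝ) 1 := ⟨hjm.1.trans hx.1, hx.2.trans hjm1.2⟩
      have hgle : g x ≤ g (t (j+1)) := hgmono hxI hjm1 hx.2
      rcases eq_or_lt_of_le (Real.sqrt_nonneg (1 - x ^ 2)) with h0 | h0
      · simp only [hfdef, ← h0, div_zero, mul_zero, le_refl]
      · rw [mul_one_div]
        exact (div_le_div_iff_of_pos_right h0).mpr hgle
  refine ⟨part1, ?_⟩
  have step : ∀ j : ℕ, j + 1 < k → α (j+1+1) - α (j+1) ≤ α (j+1) - α j := by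
    intro j hj
    have h1 := (part1 j (by omega)).2
    have h2 := (part1 (j+1) hj).1
    have hπk : 0 < π / (k:ℝ) := div_pos hπ hk0
    have hgpos : 0 < g (t (j+1)) := by
      rcases lt_or_eq_of_le (hg0 _ (htmem (j+1) (by omega))) with h | h
      · exact h
      · exfalso; rw [← h, zero_mul] at h1; linarith
    exact le_of_mul_le_mul_left (h2.trans h1) hgpos
  intro i j hij hjk
  induction j with
  | zero =>
    have : i = 0 := Nat.le_zero.mp hij
    subst this; exact le_refl _
  | succ n ih =>
    rcases Nat.eq_or_lt_of_le hij with h | h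
    · subst h; exact le_refl _
    · exact (step n hjk).trans (ih (by omega) (by omega))
end

section
/- For every j ∈ {0,1,…,k-2} one has 1 - (t_j + t_{j+1})/2 ≤ 9·(1 - t_{j+1}). -/
/-!
Write `w s = g s / √(1 - s²)`, `a = t j`, `b = t (j + 1)` and `ε = 1 - b`; we show the stronger
`1 - a < 16 ε`. The `w`-mass of `[a, b]` is `π / k > 0` and, as `j + 2 ≤ k`, at most that of
`[b, 1]`. Since `g` is increasing and `b ≥ 0`, `w s ≤ g 1 / √(1 - s)` on `[b, 1]`, so the latter
mass is at most `2 g(1) √ε`. If `1 - a ≥ 16 ε`, put `c = 1 - 16 ε ∈ [a, b]`: concavity and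
`g c ≥ 0` give `g s ≥ g 1 (s - c) / (1 - c)` on `[c, b]`, and `√(1 - s²) ≤ √2 √(1 - s)`, so an
explicit integration bounds the mass of `[c, b]` below by `27 / (8 √2) · g(1) √ε > 2 g(1) √ε`.
Hence `g 1 = 0`, and then the mass of `[b, 1]` vanishes, a contradiction.
-/

open Real MeasureTheory Set intervalIntegral

theorem ConcaveOn.mul_sub_div_sub_le {s : Set ℝ} {f : ℝ → ℝ} (hf : ConcaveOn ℝ s f)
    {x y z : ℝ} (hx : x ∈ s) (hy : y ∈ s) (hfx : 0 ≤ f x) (hxy : x < y) (hz : z ∈ Icc x y) :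
    f y * ((z - x) / (y - x)) ≤ f z := by
  have hyx : y - x ≠ 0 := (sub_pos.2 hxy).ne'
  have hl : 0 ≤ (y - z) / (y - x) := div_nonneg (sub_nonneg.2 hz.2) (sub_pos.2 hxy).le
  have hm : 0 ≤ (z - x) / (y - x) := div_nonneg (sub_nonneg.2 hz.1) (sub_pos.2 hxy).le
  have hcomb := hf.2 hx hy hl hm (by field_simp; ring)
  have hpt : ((y - z) / (y - x)) • x + ((z - x) / (y - x)) • y = z := by
    simp only [smul_eq_mul]; field_simp; ring
  rw [hpt, smul_eq_mul, smul_eq_mul] at hcomb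
  nlinarith [mul_nonneg hl hfx]

theorem hasDerivAt_affine_mul_sqrt_one_sub (c : ℝ) {s : ℝ} (hs : s < 1) :
    HasDerivAt (fun x => -(2 / 3) * (x + 2 - 3 * c) * √(1 - x)) ((s - c) / √(1 - s)) s := by
  have h1s : 0 < 1 - s := sub_pos.2 hs
  have hsqrt : HasDerivAt (fun x => √(1 - x)) (-1 / (2 * √(1 - s))) s := by
    simpa using ((hasDerivAt_id s).const_sub 1).sqrt h1s.ne'
  refine ((((hasDerivAt_id' s).add_const 2).sub_const (3 * c)).const_mul (-(2 / 3))).mul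
    hsqrt |>.congr_deriv ?_
  have hq : √(1 - s) ≠ 0 := (sqrt_pos.2 h1s).ne'
  field_simp
  rw [sq_sqrt h1s.le]
  ring

theorem intervalIntegrable_sub_div_sqrt_one_sub {c b : ℝ} (hcb : c ≤ b) (hb : b < 1) :
    IntervalIntegrable (fun s => (s - c) / √(1 - s)) volume c b :=
  ContinuousOn.intervalIntegrable <| (continuousOn_id.sub continuousOn_const).div (by fun_prop)
    fun s hs => (sqrt_pos.2 (sub_pos.2 (((uIcc_of_le hcb ▸ hs).2).trans_lt hb))).ne'

theorem integral_sub_div_sqrt_one_sub {c b : ℝ} (hcb : c ≤ b) (hb : b < 1) :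
    ∫ s in c..b, (s - c) / √(1 - s) =
      2 / 3 * (√(1 - c) - √(1 - b)) ^ 2 * (2 * √(1 - c) + √(1 - b)) := by
  rw [integral_eq_sub_of_hasDerivAt (fun s hs => hasDerivAt_affine_mul_sqrt_one_sub c
    (((uIcc_of_le hcb ▸ hs).2).trans_lt hb)) (intervalIntegrable_sub_div_sqrt_one_sub hcb hb)]
  have hp := sq_sqrt (sub_nonneg.2 (hcb.trans hb.le) : 0 ≤ 1 - c)
  have hq := sq_sqrt (sub_nonneg.2 hb.le : 0 ≤ 1 - b)
  linear_combination (-(2/3) * √(1 - b)) * hq + (2 * √(1 - b) - 4 / 3 * √(1 - c)) * hp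

theorem integral_one_sub_rpow_neg_half (b : ℝ) :
    ∫ s in b..1, (1 - s) ^ (-(1 / 2) : ℝ) = 2 * √(1 - b) := by
  rw [integral_comp_sub_left (fun x : ℝ => x ^ (-(1 / 2) : ℝ)) 1,
    integral_rpow (Or.inl (by norm_num)), sub_self, zero_rpow (by norm_num),
    show (-(1 / 2) : ℝ) + 1 = 1 / 2 by norm_num, ← sqrt_eq_rpow]
  ring

theorem intervalIntegrable_one_sub_rpow_neg_half (b : ℝ) :
    IntervalIntegrable (fun s : ℝ => (1 - s) ^ (-(1 / 2) : ℝ)) volume b 1 := by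
  simpa using (intervalIntegrable_rpow' (a := 1 - b) (b := 0) (r := -(1 / 2))
    (by norm_num)).comp_sub_left 1

theorem sqrt_one_sub_sq_le_sqrt_two_mul (s : ℝ) : √(1 - s ^ 2) ≤ √2 * √(1 - s) := by
  rw [← sqrt_mul zero_le_two]
  exact sqrt_le_sqrt (by nlinarith [sq_nonneg (1 - s)])

theorem sqrt_one_sub_le_sqrt_one_sub_sq {s : ℝ} (hs : s ∈ Icc (0:ℝ) 1) :
    √(1 - s) ≤ √(1 - s ^ 2) :=
  sqrt_le_sqrt (by nlinarith [hs.1, hs.2])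

theorem mul_integral_sub_div_sqrt_le_integral {g : ℝ → ℝ} (hg0 : ∀ x ∈ Icc (-1:ℝ) 1, 0 ≤ g x)
    (hgconc : ConcaveOn ℝ (Icc (-1:ℝ) 1) g) {c b : ℝ} (hc : -1 ≤ c) (hcb : c ≤ b) (hb : b < 1)
    (hint : IntervalIntegrable (fun s => g s / √(1 - s ^ 2)) volume c b) :
    g 1 / ((1 - c) * √2) * ∫ s in c..b, (s - c) / √(1 - s) ≤
      ∫ s in c..b, g s / √(1 - s ^ 2) := by
  rw [← intervalIntegral.integral_const_mul]
  refine integral_mono_on_of_le_Ioo hcb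
    ((intervalIntegrable_sub_div_sqrt_one_sub hcb hb).const_mul _) hint fun s hs => ?_
  have hcI : c ∈ Icc (-1:ℝ) 1 := ⟨hc, by linarith⟩
  have hs1 : s < 1 := hs.2.trans hb
  have hchord : g 1 * ((s - c) / (1 - c)) ≤ g s :=
    hgconc.mul_sub_div_sub_le hcI (by norm_num) (hg0 c hcI) (by linarith) ⟨hs.1.le, hs1.le⟩
  have hden : 0 < √(1 - s ^ 2) := sqrt_pos.2 (by nlinarith [hc.trans_lt hs.1])
  calc g 1 / ((1 - c) * √2) * ((s - c) / √(1 - s))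
      = g 1 * ((s - c) / (1 - c)) / (√2 * √(1 - s)) := by
        field_simp [show 1 - c ≠ 0 by linarith]
    _ ≤ g 1 * ((s - c) / (1 - c)) / √(1 - s ^ 2) :=
        div_le_div_of_nonneg_left
          (mul_nonneg (hg0 1 (by norm_num)) (div_nonneg (by linarith [hs.1]) (by linarith)))
          hden (sqrt_one_sub_sq_le_sqrt_two_mul s)
    _ ≤ g s / √(1 - s ^ 2) := div_le_div_of_nonneg_right hchord hden.le

theorem integral_div_sqrt_one_sub_sq_le {g : ℝ → ℝ} (hg1 : 0 ≤ g 1)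
    (hgmono : MonotoneOn g (Icc (-1:ℝ) 1)) {b : ℝ} (hb0 : 0 ≤ b) (hb1 : b ≤ 1)
    (hint : IntervalIntegrable (fun s => g s / √(1 - s ^ 2)) volume b 1) :
    ∫ s in b..1, g s / √(1 - s ^ 2) ≤ g 1 * (2 * √(1 - b)) := by
  rw [← integral_one_sub_rpow_neg_half, ← intervalIntegral.integral_const_mul]
  refine integral_mono_on_of_le_Ioo hb1 hint
    ((intervalIntegrable_one_sub_rpow_neg_half b).const_mul _) fun s hs => ?_
  have hs1 : 0 < 1 - s := sub_pos.2 hs.2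
  rw [rpow_neg hs1.le, ← sqrt_eq_rpow, ← div_eq_mul_inv]
  exact div_le_div₀ hg1 (hgmono ⟨by linarith [hs.1], hs.2.le⟩ (by norm_num) hs.2.le)
    (sqrt_pos.2 hs1) (sqrt_one_sub_le_sqrt_one_sub_sq ⟨hb0.trans hs.1.le, hs.2.le⟩)

theorem one_sub_lt_sixteen_mul_one_sub {g : ℝ → ℝ} (hg0 : ∀ x ∈ Icc (-1:ℝ) 1, 0 ≤ g x)
    (hgmono : MonotoneOn g (Icc (-1:ℝ) 1)) (hgconc : ConcaveOn ℝ (Icc (-1:ℝ) 1) g)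
    {a b : ℝ} (ha : -1 ≤ a) (hb : b < 1)
    (hint : IntervalIntegrable (fun s => g s / √(1 - s ^ 2)) volume a 1)
    (hpos : 0 < ∫ s in a..b, g s / √(1 - s ^ 2))
    (hle : ∫ s in a..b, g s / √(1 - s ^ 2) ≤ ∫ s in b..1, g s / √(1 - s ^ 2)) :
    1 - a < 16 * (1 - b) := by
  by_contra! h
  set c := 1 - 16 * (1 - b) with hc
  have hac : a ≤ c := by linarith
  have hcb : c ≤ b := by linarith
  have hsub : ∀ x ∈ Icc a 1, ∀ y ∈ Icc a 1,
      IntervalIntegrable (fun s => g s / √(1 - s ^ 2)) volume x y := fun x hx y hy =>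
    hint.mono_set (uIcc_subset_uIcc (Icc_subset_uIcc hx) (Icc_subset_uIcc hy))
  obtain ⟨q, hq, hbq⟩ : ∃ q, 0 < q ∧ √(1 - b) = q := ⟨_, sqrt_pos.2 (by linarith), rfl⟩
  have hcq : √(1 - c) = 4 * q := by
    rw [hc, show 1 - (1 - 16 * (1 - b)) = 4 ^ 2 * (1 - b) by ring, sqrt_mul (by norm_num),
      sqrt_sq (by norm_num), hbq]
  have hbq2 : 1 - b = q ^ 2 := by rw [← hbq, sq_sqrt (by linarith)]
  have hlower : g 1 * q * (27 / 8) / √2 ≤ ∫ s in a..b, g s / √(1 - s ^ 2) :=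
    calc g 1 * q * (27 / 8) / √2
        = g 1 / ((1 - c) * √2) * ∫ s in c..b, (s - c) / √(1 - s) := by
          rw [integral_sub_div_sqrt_one_sub hcb hb, hcq, hbq, show 1 - c = 16 * q ^ 2 by linarith]
          field_simp
          ring
      _ ≤ ∫ s in c..b, g s / √(1 - s ^ 2) :=
          mul_integral_sub_div_sqrt_le_integral hg0 hgconc (ha.trans hac) hcb hb
            (hsub c ⟨hac, by linarith⟩ b ⟨hac.trans hcb, hb.le⟩)
      _ ≤ ∫ s in a..b, g s / √(1 - s ^ 2) :=
          integral_mono_interval hac hcb le_rfl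
            (ae_restrict_of_forall_mem measurableSet_Ioc fun s hs => div_nonneg
              (hg0 s ⟨ha.trans hs.1.le, hs.2.trans hb.le⟩) (sqrt_nonneg _))
            (hsub a ⟨le_rfl, by linarith⟩ b ⟨hac.trans hcb, hb.le⟩)
  have hupper : ∫ s in b..1, g s / √(1 - s ^ 2) ≤ g 1 * (2 * q) :=
    hbq ▸ integral_div_sqrt_one_sub_sq_le (hg0 1 (by norm_num)) hgmono (by linarith)
      hb.le (hsub b ⟨hac.trans hcb, hb.le⟩ 1 ⟨by linarith, le_rfl⟩)
  have hsqrt2 : √2 < 3 / 2 := (sqrt_lt' (by norm_num)).2 (by norm_num)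
  have hX : g 1 * q ≤ 0 := by
    have := (div_le_iff₀ (sqrt_pos.2 zero_lt_two)).1 (hlower.trans (hle.trans hupper))
    nlinarith [mul_nonneg (hg0 1 (by norm_num)) hq.le]
  linarith

theorem stmt_13_general (k : ℕ) (g : ℝ → ℝ)
    (hg0 : ∀ x ∈ Set.Icc (-1:ℝ) 1, 0 ≤ g x)
    (hgmono : MonotoneOn g (Set.Icc (-1:ℝ) 1))
    (hgconc : ConcaveOn ℝ (Set.Icc (-1:ℝ) 1) g)
    (t : ℕ → ℝ)
    (htk : t k = 1)
    (htmem : ∀ j ≤ k, t j ∈ Set.Icc (-1:ℝ) 1)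
    (htmono : ∀ i j : ℕ, i < j → j ≤ k → t i < t j)
    (htW : ∀ j ≤ k,
      ((k : ℝ) / π) * ∫ s in (-1:ℝ)..(t j), g s / Real.sqrt (1 - s ^ 2) = (j : ℝ))
    :
    ∀ j : ℕ, j + 2 ≤ k →
      1 - (t j + t (j + 1)) / 2 ≤ 9 * (1 - t (j + 1)) := by
  intro j hj
  have hkπ : (0:ℝ) < k / π := div_pos (by exact_mod_cast (by omega : 0 < k)) pi_pos
  have hint : IntervalIntegrable (fun s => g s / √(1 - s ^ 2)) volume (-1) 1 :=
    intervalIntegrable_of_integral_ne_zero fun h0 => by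
      have hk := htW k le_rfl
      rw [htk, h0, mul_zero] at hk
      exact absurd (by exact_mod_cast hk.symm : k = 0) (by omega)
  have hsub : ∀ x ∈ Icc (-1:ℝ) 1, ∀ y ∈ Icc (-1:ℝ) 1,
      IntervalIntegrable (fun s => g s / √(1 - s ^ 2)) volume x y := fun x hx y hy =>
    hint.mono_set (uIcc_subset_uIcc (Icc_subset_uIcc hx) (Icc_subset_uIcc hy))
  have hseg : ∀ i ≤ k, ∀ l ≤ k,
      k / π * ∫ s in t i..t l, g s / √(1 - s ^ 2) = (l : ℝ) - i := fun i hi l hl => by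
    rw [← integral_interval_sub_left (hsub (-1) (by norm_num) _ (htmem l hl))
      (hsub (-1) (by norm_num) _ (htmem i hi)), mul_sub, htW l hl, htW i hi]
  have hpos : 0 < ∫ s in t j..t (j + 1), g s / √(1 - s ^ 2) :=
    pos_of_mul_pos_right (by rw [hseg j (by omega) (j + 1) (by omega)]; norm_num) hkπ.le
  have hle : ∫ s in t j..t (j + 1), g s / √(1 - s ^ 2) ≤
      ∫ s in t (j + 1)..1, g s / √(1 - s ^ 2) := by
    have hrest := hseg (j + 1) (by omega) k le_rfl
    rw [htk] at hrest
    refine le_of_mul_le_mul_left ?_ hkπ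
    rw [hseg j (by omega) (j + 1) (by omega), hrest]
    have hjk : (j : ℝ) + 2 ≤ k := by exact_mod_cast hj
    push_cast
    linarith
  have key := one_sub_lt_sixteen_mul_one_sub hg0 hgmono hgconc (htmem j (by omega)).1
    (htk ▸ htmono (j + 1) k (by omega) le_rfl) (hsub _ (htmem j (by omega)) 1 (by norm_num))
    hpos hle
  linarith [(htmem (j + 1) (by omega)).2]

theorem stmt_13 (k : ℕ) (hk : 2 ≤ k) (g : ℝ → ℝ)
    (hg0 : ∀ x ∈ Set.Icc (-1:ℝ) 1, 0 ≤ g x)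
    (hgmono : MonotoneOn g (Set.Icc (-1:ℝ) 1))
    (hgconc : ConcaveOn ℝ (Set.Icc (-1:ℝ) 1) g)
    (hgconv : ConvexOn ℝ (Set.Ioo (-1:ℝ) 1) (fun s => g s / (1 + s)))
    (hnorm : (1 / π) * ∫ s in (-1:ℝ)..1, g s / Real.sqrt (1 - s ^ 2) = 1)
    (t : ℕ → ℝ)
    (ht0 : t 0 = -1) (htk : t k = 1)
    (htmem : ∀ j ≤ k, t j ∈ Set.Icc (-1:ℝ) 1)
    (htmono : ∀ i j : ℕ, i < j → j ≤ k → t i < t j)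
    (htW : ∀ j ≤ k,
      ((k : ℝ) / π) * ∫ s in (-1:ℝ)..(t j), g s / Real.sqrt (1 - s ^ 2) = (j : ℝ))
    :
    ∀ j : ℕ, j + 2 ≤ k →
      1 - (t j + t (j + 1)) / 2 ≤ 9 * (1 - t (j + 1)) :=
  stmt_13_general k g hg0 hgmono hgconc t htk htmem htmono htW
end

section
/- One has t_{k-1} ≥ 0; that is, the second-to-last partition point is nonnegative. -/
/-!
Write `f = g / √(1 - s²)`. Since `g` is increasing, `f(-s) ≤ f(s)`, so at most half of the total
mass `π` of `f` lies in `[-1, 0]`, i.e. `W_g(0) ≤ k/2 ≤ k - 1 = W_g(t_{k-1})`. On the other hand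
`W_g` is strictly increasing once it is positive: if `∫_{-1}^a f > 0` then `g(a) > 0` (otherwise
the monotone nonnegative `g` vanishes on `[-1, a]`), and then `f ≥ g ≥ g(a)` on `(a, 1)`.
Hence `t_{k-1} < 0` would give `W_g(0) > W_g(t_{k-1})`, a contradiction.
-/

open Real MeasureTheory Set intervalIntegral

noncomputable def chebyshevWeighted (g : ℝ → ℝ) (s : ℝ) : ℝ := g s / √(1 - s ^ 2)

theorem le_chebyshevWeighted {g : ℝ → ℝ} {s : ℝ} (hs : s ∈ Ioo (-1) 1) (h : 0 ≤ g s) :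
    g s ≤ chebyshevWeighted g s := by
  have hsq : 0 < 1 - s ^ 2 := by nlinarith [hs.1, hs.2]
  have hsqrt_le : √(1 - s ^ 2) ≤ 1 := sqrt_le_one.mpr (by nlinarith)
  exact (le_div_iff₀ (sqrt_pos.mpr hsq)).mpr (mul_le_of_le_one_right h hsqrt_le)

theorem IntervalIntegrable.mono_Icc {f : ℝ → ℝ} {a b c d : ℝ}
    (hf : IntervalIntegrable f volume a b) (hc : c ∈ Icc a b) (hd : d ∈ Icc a b) :
    IntervalIntegrable f volume c d :=
  hf.mono_set (uIcc_subset_uIcc (Icc_subset_uIcc hc) (Icc_subset_uIcc hd))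

theorem integral_neg_le_integral_of_comp_neg_le {f : ℝ → ℝ} {b : ℝ} (hb : 0 ≤ b)
    (hf : IntervalIntegrable f volume (-b) b) (h : ∀ s ∈ Icc 0 b, f (-s) ≤ f s) :
    ∫ s in -b..0, f s ≤ ∫ s in 0..b, f s := by
  have hzero : (0 : ℝ) ∈ Icc (-b) b := ⟨by linarith, hb⟩
  have hleft : IntervalIntegrable f volume (-b) 0 :=
    hf.mono_Icc (left_mem_Icc.mpr (by linarith)) hzero
  have hright : IntervalIntegrable f volume 0 b :=
    hf.mono_Icc hzero (right_mem_Icc.mpr (by linarith))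
  calc ∫ s in -b..0, f s = ∫ s in 0..b, f (-s) := by simp [integral_comp_neg]
    _ ≤ ∫ s in 0..b, f s :=
      integral_mono_on hb (by simpa using ((IntervalIntegrable.iff_comp_neg).mp hleft).symm)
        hright h

section

variable {g : ℝ → ℝ}

theorem integral_chebyshevWeighted_neg_le_half (hg : MonotoneOn g (Icc (-1) 1))
    (hint : IntervalIntegrable (chebyshevWeighted g) volume (-1) 1) :
    ∫ s in -1..0, chebyshevWeighted g s ≤ (∫ s in -1..1, chebyshevWeighted g s) / 2 := by
  have hsym := integral_neg_le_integral_of_comp_neg_le zero_le_one hint fun s hs => by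
    unfold chebyshevWeighted
    rw [neg_sq]
    exact div_le_div_of_nonneg_right
      (hg ⟨by linarith [hs.2], by linarith [hs.1]⟩ ⟨by linarith [hs.1], hs.2⟩ (by linarith [hs.1]))
      (sqrt_nonneg _)
  have hzero : (0 : ℝ) ∈ Icc (-1) 1 := ⟨by norm_num, by norm_num⟩
  rw [← integral_add_adjacent_intervals (hint.mono_Icc (left_mem_Icc.mpr (by norm_num)) hzero)
    (hint.mono_Icc hzero (right_mem_Icc.mpr (by norm_num)))]
  linarith

theorem integral_chebyshevWeighted_eq_zero (hg0 : ∀ s ∈ Icc (-1) 1, 0 ≤ g s)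
    (hg : MonotoneOn g (Icc (-1) 1)) {a : ℝ} (ha : a ∈ Icc (-1) 1) (hga : g a ≤ 0) :
    ∫ s in -1..a, chebyshevWeighted g s = 0 := by
  have hzero : EqOn (chebyshevWeighted g) 0 (uIcc (-1) a) := by
    intro s hs
    rw [uIcc_of_le ha.1] at hs
    have hs' : s ∈ Icc (-1) 1 := ⟨hs.1, hs.2.trans ha.2⟩
    simp [chebyshevWeighted, le_antisymm ((hg hs' ha hs.2).trans hga) (hg0 s hs')]
  simp [integral_congr hzero]

theorem integral_chebyshevWeighted_pos (hg : MonotoneOn g (Icc (-1) 1)) {a b : ℝ}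
    (ha : -1 ≤ a) (hab : a < b) (hb : b ≤ 1)
    (hint : IntervalIntegrable (chebyshevWeighted g) volume a b) (hga : 0 < g a) :
    0 < ∫ s in a..b, chebyshevWeighted g s := by
  have hbound : ∀ s ∈ Ioo a b, g a ≤ chebyshevWeighted g s := fun s hs => by
    have hgs := hg ⟨ha, hab.le.trans hb⟩ ⟨by linarith [hs.1], by linarith [hs.2]⟩ hs.1.le
    exact hgs.trans
      (le_chebyshevWeighted ⟨by linarith [hs.1], by linarith [hs.2]⟩ (hga.le.trans hgs))
  calc 0 < ∫ _ in a..b, g a := by simp [hga, hab]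
    _ ≤ _ := integral_mono_on_of_le_Ioo hab.le intervalIntegrable_const hint hbound

theorem integral_chebyshevWeighted_pos_of_pos (hg0 : ∀ s ∈ Icc (-1) 1, 0 ≤ g s)
    (hg : MonotoneOn g (Icc (-1) 1))
    (hint : IntervalIntegrable (chebyshevWeighted g) volume (-1) 1) {a b : ℝ}
    (ha : -1 ≤ a) (hab : a < b) (hb : b ≤ 1)
    (hpos : 0 < ∫ s in -1..a, chebyshevWeighted g s) :
    0 < ∫ s in a..b, chebyshevWeighted g s := by
  refine integral_chebyshevWeighted_pos hg ha hab hb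
    (hint.mono_Icc ⟨ha, by linarith⟩ ⟨by linarith, hb⟩) ?_
  by_contra! hga
  exact hpos.ne' (integral_chebyshevWeighted_eq_zero hg0 hg ⟨ha, by linarith⟩ hga)

end

theorem stmt_15_general (k : ℕ) (hk : 2 ≤ k) (g : ℝ → ℝ)
    (hg0 : ∀ x ∈ Set.Icc (-1:ℝ) 1, 0 ≤ g x)
    (hgmono : MonotoneOn g (Set.Icc (-1:ℝ) 1))
    (hnorm : (1 / π) * ∫ s in (-1:ℝ)..1, g s / Real.sqrt (1 - s ^ 2) = 1)
    (t : ℕ → ℝ)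
    (htmem : ∀ j ≤ k, t j ∈ Set.Icc (-1:ℝ) 1)
    (htW : ∀ j ≤ k,
      ((k : ℝ) / π) * ∫ s in (-1:ℝ)..(t j), g s / Real.sqrt (1 - s ^ 2) = (j : ℝ))
    :
    0 ≤ t (k - 1) := by
  change (1 / π) * ∫ s in (-1:ℝ)..1, chebyshevWeighted g s = 1 at hnorm
  have htotal : ∫ s in (-1:ℝ)..1, chebyshevWeighted g s = π := by
    field_simp at hnorm
    linarith
  have hint : IntervalIntegrable (chebyshevWeighted g) volume (-1) 1 := by
    by_contra h
    rw [integral_undef h] at htotal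
    exact pi_ne_zero htotal.symm
  set a := t (k - 1)
  have ha : a ∈ Icc (-1) 1 := htmem (k - 1) (Nat.sub_le k 1)
  have hWa : ((k : ℝ) / π) * ∫ s in (-1:ℝ)..a, chebyshevWeighted g s = k - 1 := by
    have hW := htW (k - 1) (Nat.sub_le k 1)
    rwa [Nat.cast_sub (by omega), Nat.cast_one] at hW
  by_contra! hneg
  have hk' : (2 : ℝ) ≤ k := by exact_mod_cast hk
  have hc : 0 < (k : ℝ) / π := by positivity
  have hgap : 0 < ∫ s in a..0, chebyshevWeighted g s :=
    integral_chebyshevWeighted_pos_of_pos hg0 hgmono hint ha.1 hneg zero_le_one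
      (pos_of_mul_pos_right (hWa ▸ by linarith) hc.le)
  have hhalf := integral_chebyshevWeighted_neg_le_half hgmono hint
  rw [htotal, ← integral_add_adjacent_intervals
    (hint.mono_Icc (left_mem_Icc.mpr (by norm_num)) ha)
    (hint.mono_Icc ha ⟨by norm_num, by norm_num⟩)] at hhalf
  have : (k : ℝ) - 1 < k / 2 := calc
    (k : ℝ) - 1 < (k / π) * ((∫ s in (-1:ℝ)..a, chebyshevWeighted g s) +
        ∫ s in a..0, chebyshevWeighted g s) := by
      rw [mul_add, hWa]
      linarith [mul_pos hc hgap]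
    _ ≤ (k / π) * (π / 2) := mul_le_mul_of_nonneg_left hhalf hc.le
    _ = k / 2 := by field_simp
  linarith

theorem stmt_15 (k : ℕ) (hk : 2 ≤ k) (g : ℝ → ℝ)
    (hg0 : ∀ x ∈ Set.Icc (-1:ℝ) 1, 0 ≤ g x)
    (hgmono : MonotoneOn g (Set.Icc (-1:ℝ) 1))
    (hgconc : ConcaveOn ℝ (Set.Icc (-1:ℝ) 1) g)
    (hgconv : ConvexOn ℝ (Set.Ioo (-1:ℝ) 1) (fun s => g s / (1 + s)))
    (hnorm : (1 / π) * ∫ s in (-1:ℝ)..1, g s / Real.sqrt (1 - s ^ 2) = 1)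
    (t : ℕ → ℝ)
    (ht0 : t 0 = -1) (htk : t k = 1)
    (htmem : ∀ j ≤ k, t j ∈ Set.Icc (-1:ℝ) 1)
    (htmono : ∀ i j : ℕ, i < j → j ≤ k → t i < t j)
    (htW : ∀ j ≤ k,
      ((k : ℝ) / π) * ∫ s in (-1:ℝ)..(t j), g s / Real.sqrt (1 - s ^ 2) = (j : ℝ))
    :
    0 ≤ t (k - 1) :=
  stmt_15_general k hk g hg0 hgmono hnorm t htmem htW
end

section
/- The following three bounds hold: (a) √(t_1 - t_0) ≤ 3π/(√2·k·g(t_1)) (where t_0 = -1); (b) √(t_k - t_{k-1}) ≤ π/(k·g(1)) (where t_k = 1); (c) for every j ∈ {0,1,…,k-1}, t_{j+1} - t_j ≤ (12π/k)^{1/3}. -/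
/-!
Write `ρ = g / √(1 - s²)`; the points `t j` cut `[-1, 1]` into pieces of `ρ`-mass `π / k`.
Concavity with `g (-1) ≥ 0` gives the chord bound `g s ≥ (1 + s) / (1 + y) * g y` for `s ≤ y`,
i.e. `ρ s ≥ g y / (1 + y) * √(1 + s) / √(1 - s)`. Integrating this over the first piece with
`y = t 1` gives (a), and over any piece with `y = 1` gives (c), since `g 1 ≥ 1` (because
`g ≤ g 1` and `∫ 1 / √(1 - s²) = π`). For (b), monotonicity of `g` forces `t (k - 1) ≥ 0`, where
`√(1 + s) ≥ 1`, so the last piece has mass at least `g 1 * √(1 - t (k - 1))`.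
All integrals are estimated by comparing with explicit primitives on the open interval, which
avoids the singularities of `ρ` at `±1`.
-/

open Real MeasureTheory intervalIntegral Set

lemma ConcaveOn.sub_div_sub_mul_le {g : ℝ → ℝ} {a c y s : ℝ} (hg : ConcaveOn ℝ (Icc a c) g)
    (hga : 0 ≤ g a) (hay : a < y) (hyc : y ≤ c) (has : a ≤ s) (hsy : s ≤ y) :
    (s - a) / (y - a) * g y ≤ g s := by
  have hya : 0 < y - a := sub_pos.mpr hay
  have hcomb := hg.2 (left_mem_Icc.mpr (hay.le.trans hyc)) ⟨hay.le, hyc⟩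
    (div_nonneg (sub_nonneg.mpr hsy) hya.le) (div_nonneg (sub_nonneg.mpr has) hya.le)
    (by field_simp; ring)
  have hs : ((y - s) / (y - a)) • a + ((s - a) / (y - a)) • y = s := by
    simp only [smul_eq_mul]; field_simp; ring
  rw [hs, smul_eq_mul, smul_eq_mul] at hcomb
  nlinarith [mul_nonneg (div_nonneg (sub_nonneg.mpr hsy) hya.le) hga]

lemma sub_le_integral_of_hasDerivAt_of_le {φ G G' : ℝ → ℝ} {a b : ℝ} (hab : a ≤ b)
    (hG : ContinuousOn G (Icc a b)) (hderiv : ∀ x ∈ Ioo a b, HasDerivAt G (G' x) x)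
    (hφ : IntervalIntegrable φ volume a b) (hle : ∀ x ∈ Ioo a b, G' x ≤ φ x) :
    G b - G a ≤ ∫ x in a..b, φ x :=
  sub_le_integral_of_hasDeriv_right_of_le hab hG (fun x hx => (hderiv x hx).hasDerivWithinAt)
    ((intervalIntegrable_iff_integrableOn_Icc_of_le hab).mp hφ) hle

lemma integral_le_sub_of_hasDerivAt_of_le {φ G G' : ℝ → ℝ} {a b : ℝ} (hab : a ≤ b)
    (hG : ContinuousOn G (Icc a b)) (hderiv : ∀ x ∈ Ioo a b, HasDerivAt G (G' x) x)
    (hφ : IntervalIntegrable φ volume a b) (hle : ∀ x ∈ Ioo a b, φ x ≤ G' x) :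
    ∫ x in a..b, φ x ≤ G b - G a :=
  integral_le_sub_of_hasDeriv_right_of_le hab hG (fun x hx => (hderiv x hx).hasDerivWithinAt)
    ((intervalIntegrable_iff_integrableOn_Icc_of_le hab).mp hφ) hle

lemma hasDerivAt_two_thirds_mul_sub_mul_sqrt {a x : ℝ} (hx : a < x) :
    HasDerivAt (fun x => 2 / 3 * ((x - a) * √(x - a))) √(x - a) x := by
  have hu : 0 < x - a := sub_pos.mpr hx
  refine ((((hasDerivAt_id' x).sub_const a).mul
    (((hasDerivAt_id' x).sub_const a).sqrt hu.ne')).const_mul (2 / 3)).congr_deriv ?_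
  have := sq_sqrt hu.le
  field_simp
  linarith

lemma hasDerivAt_neg_two_mul_sqrt_one_sub {x : ℝ} (hx : x < 1) :
    HasDerivAt (fun x => -2 * √(1 - x)) (1 / √(1 - x)) x :=
  ((((hasDerivAt_id' x).const_sub 1).sqrt (sub_pos.mpr hx).ne').const_mul (-2)).congr_deriv
    (by field_simp)

section Density

variable {g : ℝ → ℝ} {a b : ℝ}

lemma sqrt_div_sqrt_mul_le_density (hgc : ConcaveOn ℝ (Icc (-1) 1) g) (hg0 : 0 ≤ g (-1))
    {s y : ℝ} (hs : -1 < s) (hs1 : s < 1) (hsy : s ≤ y) (hy : y ≤ 1) :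
    g y / (1 + y) * (√(1 + s) / √(1 - s)) ≤ g s / √(1 - s ^ 2) := by
  have hchord := hgc.sub_div_sub_mul_le hg0 (hs.trans_le hsy) hy hs.le hsy
  have hsq : √(1 - s ^ 2) = √(1 - s) * √(1 + s) := by
    rw [← sqrt_mul (by linarith)]; ring_nf
  have h1s : 0 < √(1 - s) := sqrt_pos.mpr (by linarith)
  have h1s' : 0 < √(1 + s) := sqrt_pos.mpr (by linarith)
  calc g y / (1 + y) * (√(1 + s) / √(1 - s))
      = (s - -1) / (y - -1) * g y / √(1 - s ^ 2) := by
        rw [hsq]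
        field_simp
        rw [sq_sqrt (by linarith)]
        ring
    _ ≤ g s / √(1 - s ^ 2) := div_le_div_of_nonneg_right hchord (sqrt_nonneg _)

lemma mul_arcsin_sub_le_integral_density (hgm : MonotoneOn g (Icc (-1) 1)) (ha : -1 ≤ a)
    (hab : a ≤ b) (hb : b ≤ 1)
    (hint : IntervalIntegrable (fun s => g s / √(1 - s ^ 2)) volume a b) :
    g a * (arcsin b - arcsin a) ≤ ∫ s in a..b, g s / √(1 - s ^ 2) := by
  rw [mul_sub]
  refine sub_le_integral_of_hasDerivAt_of_le hab
    (continuous_const.mul continuous_arcsin).continuousOn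
    (fun x hx => (hasDerivAt_arcsin (by linarith [hx.1]) (by linarith [hx.2])).const_mul (g a))
    hint fun x hx => ?_
  rw [mul_one_div]
  exact div_le_div_of_nonneg_right (hgm ⟨ha, by linarith⟩ ⟨by linarith [hx.1], by linarith [hx.2]⟩
    hx.1.le) (sqrt_nonneg _)

lemma integral_density_le_mul_arcsin_sub (hgm : MonotoneOn g (Icc (-1) 1)) (ha : -1 ≤ a)
    (hab : a ≤ b) (hb : b ≤ 1)
    (hint : IntervalIntegrable (fun s => g s / √(1 - s ^ 2)) volume a b) :
    ∫ s in a..b, g s / √(1 - s ^ 2) ≤ g b * (arcsin b - arcsin a) := by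
  rw [mul_sub]
  refine integral_le_sub_of_hasDerivAt_of_le hab
    (continuous_const.mul continuous_arcsin).continuousOn
    (fun x hx => (hasDerivAt_arcsin (by linarith [hx.1]) (by linarith [hx.2])).const_mul (g b))
    hint fun x hx => ?_
  rw [mul_one_div]
  exact div_le_div_of_nonneg_right (hgm ⟨by linarith [hx.1], by linarith [hx.2]⟩ ⟨by linarith, hb⟩
    hx.2.le) (sqrt_nonneg _)

lemma pos_of_integral_density_pos (hgm : MonotoneOn g (Icc (-1) 1)) (ha : -1 ≤ a)
    (hab : a ≤ b) (hb : b ≤ 1)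
    (hint : IntervalIntegrable (fun s => g s / √(1 - s ^ 2)) volume a b)
    (hpos : 0 < ∫ s in a..b, g s / √(1 - s ^ 2)) : 0 < g b := by
  have := integral_density_le_mul_arcsin_sub hgm ha hab hb hint
  have := arcsin_le_arcsin hab
  nlinarith

lemma one_le_of_integral_density_eq_pi (hgm : MonotoneOn g (Icc (-1) 1))
    (hint : IntervalIntegrable (fun s => g s / √(1 - s ^ 2)) volume (-1) 1)
    (h : ∫ s in (-1)..1, g s / √(1 - s ^ 2) = π) : 1 ≤ g 1 := by
  have := integral_density_le_mul_arcsin_sub hgm le_rfl (by norm_num) le_rfl hint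
  rw [h, arcsin_one, arcsin_neg_one] at this
  nlinarith [pi_pos]

/-- Both sides are compared with `g a` times the arcsine length of their interval, and the left
interval is the shorter one when `a < 0`. -/
lemma nonneg_of_integral_density_le (hgm : MonotoneOn g (Icc (-1) 1)) (ha : -1 ≤ a) (ha1 : a ≤ 1)
    (hleft : IntervalIntegrable (fun s => g s / √(1 - s ^ 2)) volume (-1) a)
    (hright : IntervalIntegrable (fun s => g s / √(1 - s ^ 2)) volume a 1)
    (hpos : 0 < ∫ s in (-1)..a, g s / √(1 - s ^ 2))
    (hle : ∫ s in a..1, g s / √(1 - s ^ 2) ≤ ∫ s in (-1)..a, g s / √(1 - s ^ 2)) : 0 ≤ a := by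
  have hga := pos_of_integral_density_pos hgm le_rfl ha ha1 hleft hpos
  have hL := integral_density_le_mul_arcsin_sub hgm le_rfl ha ha1 hleft
  have hR := mul_arcsin_sub_le_integral_density hgm ha ha1 le_rfl hright
  rw [arcsin_neg_one] at hL
  rw [arcsin_one] at hR
  exact arcsin_nonneg.mp (by nlinarith)

lemma two_thirds_mul_sub_mul_sqrt_le_integral_density (hgc : ConcaveOn ℝ (Icc (-1) 1) g)
    (hg0 : 0 ≤ g (-1)) {y : ℝ} (hgy : 0 ≤ g y) (ha : -1 ≤ a) (hab : a ≤ b) (hby : b ≤ y)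
    (hy : y ≤ 1) (hint : IntervalIntegrable (fun s => g s / √(1 - s ^ 2)) volume a b) :
    g y / ((1 + y) * √2) * (2 / 3 * ((b - a) * √(b - a))) ≤ ∫ s in a..b, g s / √(1 - s ^ 2) := by
  have h := sub_le_integral_of_hasDerivAt_of_le hab (by fun_prop)
    (fun x hx => (hasDerivAt_two_thirds_mul_sub_mul_sqrt hx.1).const_mul (g y / ((1 + y) * √2)))
    hint fun x hmem => ?_
  · simpa using h
  have hx : -1 < x := by linarith [hmem.1]
  have hx1 : x < 1 := by linarith [hmem.2]
  have hy1 : 0 < 1 + y := by linarith [hmem.2]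
  refine le_trans ?_ (sqrt_div_sqrt_mul_le_density hgc hg0 hx hx1 (by linarith [hmem.2]) hy)
  rw [div_mul_eq_div_mul_one_div, mul_assoc, one_div_mul_eq_div]
  gcongr <;> linarith

lemma mul_sqrt_one_sub_le_integral_density (hgc : ConcaveOn ℝ (Icc (-1) 1) g) (hg0 : 0 ≤ g (-1))
    (hg1 : 0 ≤ g 1) (ha : 0 ≤ a) (ha1 : a ≤ 1)
    (hint : IntervalIntegrable (fun s => g s / √(1 - s ^ 2)) volume a 1) :
    g 1 * √(1 - a) ≤ ∫ s in a..1, g s / √(1 - s ^ 2) := by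
  have h := sub_le_integral_of_hasDerivAt_of_le ha1 (by fun_prop)
    (fun x hx => (hasDerivAt_neg_two_mul_sqrt_one_sub hx.2).const_mul (g 1 / 2)) hint
    fun x hmem => ?_
  · convert h using 1
    simp only [sub_self, sqrt_zero]
    ring
  have hx : -1 < x := by linarith [hmem.1]
  refine le_trans ?_ (sqrt_div_sqrt_mul_le_density hgc hg0 hx hmem.2 hmem.2.le le_rfl)
  rw [one_add_one_eq_two]
  gcongr
  exact one_le_sqrt.mpr (by linarith [hmem.1])

lemma sqrt_add_one_le_of_integral_density_eq (hgm : MonotoneOn g (Icc (-1) 1))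
    (hgc : ConcaveOn ℝ (Icc (-1) 1) g) (hg0 : 0 ≤ g (-1)) (hb : -1 < b) (hb1 : b ≤ 1)
    (hint : IntervalIntegrable (fun s => g s / √(1 - s ^ 2)) volume (-1) b) {δ : ℝ} (hδ : 0 < δ)
    (h : ∫ s in (-1)..b, g s / √(1 - s ^ 2) = δ) : √(b + 1) ≤ 3 * δ / (√2 * g b) := by
  have hgb := pos_of_integral_density_pos hgm le_rfl hb.le hb1 hint (h ▸ hδ)
  have hlow := two_thirds_mul_sub_mul_sqrt_le_integral_density hgc hg0 hgb.le le_rfl hb.le le_rfl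
    hb1 hint
  have hb' : 0 < 1 + b := by linarith
  have key : g b / ((1 + b) * √2) * (2 / 3 * ((b - -1) * √(b - -1)))
      = √(b + 1) * (√2 * g b) / 3 := by
    rw [sub_neg_eq_add, add_comm b]
    field_simp
    rw [sq_sqrt zero_le_two]
  rw [le_div_iff₀ (by positivity)]
  linarith

lemma sqrt_one_sub_le_of_integral_density_eq (hgm : MonotoneOn g (Icc (-1) 1))
    (hgc : ConcaveOn ℝ (Icc (-1) 1) g) (hg0 : 0 ≤ g (-1)) (hg1 : 0 < g 1) (ha : -1 ≤ a)
    (ha1 : a ≤ 1) (hleft : IntervalIntegrable (fun s => g s / √(1 - s ^ 2)) volume (-1) a)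
    (hright : IntervalIntegrable (fun s => g s / √(1 - s ^ 2)) volume a 1) {δ : ℝ} (hδ : 0 < δ)
    (h : ∫ s in a..1, g s / √(1 - s ^ 2) = δ) (hle : δ ≤ ∫ s in (-1)..a, g s / √(1 - s ^ 2)) :
    √(1 - a) ≤ δ / g 1 := by
  have ha0 := nonneg_of_integral_density_le hgm ha ha1 hleft hright (hδ.trans_le hle) (h ▸ hle)
  have := mul_sqrt_one_sub_le_integral_density hgc hg0 hg1.le ha0 ha1 hright
  rw [le_div_iff₀ hg1]
  linarith

lemma sub_mul_sqrt_sub_le_of_integral_density_le (hgc : ConcaveOn ℝ (Icc (-1) 1) g)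
    (hg0 : 0 ≤ g (-1)) (hg1 : 1 ≤ g 1) (ha : -1 ≤ a) (hab : a ≤ b) (hb : b ≤ 1)
    (hint : IntervalIntegrable (fun s => g s / √(1 - s ^ 2)) volume a b) {δ : ℝ}
    (h : ∫ s in a..b, g s / √(1 - s ^ 2) ≤ δ) : (b - a) * √(b - a) ≤ 3 * √2 * δ := by
  have hlow := two_thirds_mul_sub_mul_sqrt_le_integral_density hgc hg0 (by linarith) ha hab hb
    le_rfl hint
  have key : g 1 / ((1 + 1) * √2) * (2 / 3 * ((b - a) * √(b - a)))
      = g 1 * ((b - a) * √(b - a)) / (3 * √2) := by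
    field_simp
    ring
  have hD : 0 ≤ (b - a) * √(b - a) := mul_nonneg (sub_nonneg.mpr hab) (sqrt_nonneg _)
  rw [key, div_le_iff₀ (by positivity)] at hlow
  have := mul_le_mul_of_nonneg_right h (by positivity : (0:ℝ) ≤ 3 * √2)
  nlinarith

end Density

lemma le_rpow_one_third_of_mul_sqrt_le {d K : ℝ} (hd0 : 0 ≤ d) (hd2 : d ≤ 2) (hK : 0 < K)
    (h : d * √d ≤ 3 * √2 * π / K) : d ≤ (12 * π / K) ^ (1 / 3 : ℝ) := by
  have hcube : d ^ 3 ≤ 12 * π / K := by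
    rcases le_or_gt K (3 * π / 2) with hKs | hKl
    · calc d ^ 3 ≤ 2 ^ 3 := by gcongr
        _ ≤ 12 * π / K := by rw [le_div_iff₀ hK]; nlinarith [pi_pos]
    · calc d ^ 3 = (d * √d) ^ 2 := by rw [mul_pow, sq_sqrt hd0]; ring
        _ ≤ (3 * √2 * π / K) ^ 2 := by gcongr
        _ = 18 * π ^ 2 / K ^ 2 := by rw [div_pow, mul_pow, mul_pow, sq_sqrt zero_le_two]; ring
        _ ≤ 12 * π / K := by
          rw [div_le_div_iff₀ (by positivity) hK]
          nlinarith [mul_pos pi_pos hK]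
  calc d = (d ^ 3) ^ (1 / 3 : ℝ) := by rw [← rpow_natCast, ← rpow_mul hd0]; norm_num
    _ ≤ (12 * π / K) ^ (1 / 3 : ℝ) := by gcongr

theorem stmt_16_general (k : ℕ) (hk : 2 ≤ k) (g : ℝ → ℝ)
    (hg0 : ∀ x ∈ Set.Icc (-1:ℝ) 1, 0 ≤ g x)
    (hgmono : MonotoneOn g (Set.Icc (-1:ℝ) 1))
    (hgconc : ConcaveOn ℝ (Set.Icc (-1:ℝ) 1) g)
    (hnorm : (1 / π) * ∫ s in (-1:ℝ)..1, g s / Real.sqrt (1 - s ^ 2) = 1)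
    (t : ℕ → ℝ)
    (ht0 : t 0 = -1) (htk : t k = 1)
    (htmem : ∀ j ≤ k, t j ∈ Set.Icc (-1:ℝ) 1)
    (htmono : ∀ i j : ℕ, i < j → j ≤ k → t i < t j)
    (htW : ∀ j ≤ k,
      ((k : ℝ) / π) * ∫ s in (-1:ℝ)..(t j), g s / Real.sqrt (1 - s ^ 2) = (j : ℝ))
    :
    (Real.sqrt (t 1 - t 0) ≤ 3 * π / (Real.sqrt 2 * (k : ℝ) * g (t 1))) ∧
    (Real.sqrt (t k - t (k - 1)) ≤ π / ((k : ℝ) * g 1)) ∧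
    (∀ j : ℕ, j < k → t (j + 1) - t j ≤ (12 * π / (k : ℝ)) ^ ((1 : ℝ) / 3)) := by
  have hk0 : (0 : ℝ) < k := by positivity
  have hm1 : (-1 : ℝ) ∈ Icc (-1) 1 := left_mem_Icc.mpr (by norm_num)
  have hp1 : (1 : ℝ) ∈ Icc (-1) 1 := right_mem_Icc.mpr (by norm_num)
  have htotal : ∫ s in (-1)..1, g s / √(1 - s ^ 2) = π := by
    field_simp at hnorm; exact hnorm
  have hsub : ∀ u ∈ Icc (-1 : ℝ) 1, ∀ v ∈ Icc (-1 : ℝ) 1,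
      IntervalIntegrable (fun s => g s / √(1 - s ^ 2)) volume u v := fun u hu v hv =>
    (intervalIntegrable_of_integral_ne_zero (htotal ▸ pi_ne_zero)).mono_set
      (uIcc_subset_uIcc (Icc_subset_uIcc hu) (Icc_subset_uIcc hv))
  have hI : ∀ j ≤ k, ∫ s in (-1)..t j, g s / √(1 - s ^ 2) = j * π / k := fun j hj => by
    rw [eq_div_iff hk0.ne', ← htW j hj]; field_simp
  have hgap : ∀ j < k, ∫ s in t j..t (j + 1), g s / √(1 - s ^ 2) = π / k := fun j hj => by
    rw [← integral_interval_sub_left (hsub _ hm1 _ (htmem _ hj)) (hsub _ hm1 _ (htmem _ hj.le)),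
      hI _ hj, hI _ hj.le]
    push_cast; ring
  have hg1 := one_le_of_integral_density_eq_pi hgmono (hsub _ hm1 _ hp1) htotal
  have hlt : ∀ j < k, t j < t (j + 1) := fun j hj => htmono j (j + 1) (by omega) hj
  refine ⟨?_, ?_, fun j hj => ?_⟩
  · have hgap0 := hgap 0 (by omega)
    rw [ht0] at hgap0
    rw [ht0, sub_neg_eq_add]
    convert sqrt_add_one_le_of_integral_density_eq hgmono hgconc (hg0 _ hm1)
      (ht0 ▸ hlt 0 (by omega)) (htmem 1 (by omega)).2 (hsub _ hm1 _ (htmem 1 (by omega)))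
      (by positivity) hgap0 using 1
    field_simp
  · have hmem := htmem (k - 1) (by omega)
    have hright := hgap (k - 1) (by omega)
    rw [Nat.sub_add_cancel (by omega : 1 ≤ k), htk] at hright
    rw [htk, ← div_div]
    refine sqrt_one_sub_le_of_integral_density_eq hgmono hgconc (hg0 _ hm1) (by linarith) hmem.1
      hmem.2 (hsub _ hm1 _ hmem) (hsub _ hmem _ hp1) (by positivity) hright ?_
    have hk2 : (2 : ℝ) ≤ k := by exact_mod_cast hk
    rw [hI _ (by omega), Nat.cast_sub (by omega), Nat.cast_one]
    gcongr
    nlinarith [pi_pos]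
  · have hmem := htmem j hj.le
    have hmem' := htmem (j + 1) hj
    have := sub_mul_sqrt_sub_le_of_integral_density_le hgconc (hg0 _ hm1) hg1 hmem.1 (hlt j hj).le
      hmem'.2 (hsub _ hmem _ hmem') (hgap j hj).le
    exact le_rpow_one_third_of_mul_sqrt_le (by linarith [hlt j hj]) (by linarith [hmem.1, hmem'.2])
      hk0 (by rwa [mul_div_assoc])

theorem stmt_16 (k : ℕ) (hk : 2 ≤ k) (g : ℝ → ℝ)
    (hg0 : ∀ x ∈ Set.Icc (-1:ℝ) 1, 0 ≤ g x)
    (hgmono : MonotoneOn g (Set.Icc (-1:ℝ) 1))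
    (hgconc : ConcaveOn ℝ (Set.Icc (-1:ℝ) 1) g)
    (hgconv : ConvexOn ℝ (Set.Ioo (-1:ℝ) 1) (fun s => g s / (1 + s)))
    (hnorm : (1 / π) * ∫ s in (-1:ℝ)..1, g s / Real.sqrt (1 - s ^ 2) = 1)
    (t : ℕ → ℝ)
    (ht0 : t 0 = -1) (htk : t k = 1)
    (htmem : ∀ j ≤ k, t j ∈ Set.Icc (-1:ℝ) 1)
    (htmono : ∀ i j : ℕ, i < j → j ≤ k → t i < t j)
    (htW : ∀ j ≤ k,
      ((k : ℝ) / π) * ∫ s in (-1:ℝ)..(t j), g s / Real.sqrt (1 - s ^ 2) = (j : ℝ))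
    :
    (Real.sqrt (t 1 - t 0) ≤ 3 * π / (Real.sqrt 2 * (k : ℝ) * g (t 1))) ∧
    (Real.sqrt (t k - t (k - 1)) ≤ π / ((k : ℝ) * g 1)) ∧
    (∀ j : ℕ, j < k → t (j + 1) - t j ≤ (12 * π / (k : ℝ)) ^ ((1 : ℝ) / 3)) :=
  stmt_16_general k hk g hg0 hgmono hgconc hnorm t ht0 htk htmem htmono htW
end
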